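/- arXiv:2601.07751 — 4 statements merged into one kernel-verified Lean document; each statement's English description precedes it below -/
import Mathlib

section
/- Let n, m and k be positive integers and let K be a triangulation with integer vertices of the simplex Δ_m^n. For each non-negative integer i, let s_i(K) denote the number of i-dimensional faces of K whose relative interior is contained in the interior of Δ_m^n. Then the number of points of ℤ^n lying in the interior of the dilated simplex k·Δ_m^n is at least Σ_{i=0}^{k−1} C(k−1, i) · s_i(K). -/
/-- The canonical inclusion of integer points into real space. -/
def toReal {n : ℕ} (p : Fin n → ℤ) : Fin n → ℝ := fun t => (p t : ℝ)

/-- A point of `ℝ^n` is a lattice point if all its coordinates are integers. -/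
def IsLatticePoint {n : ℕ} (x : Fin n → ℝ) : Prop := ∀ t, ∃ z : ℤ, x t = (z : ℝ)

/-- `bigSimplex n c` is the simplex `Δ_c^n`, the convex hull of the origin and the points
`c·e_1, ..., c·e_n`, described by the inequalities `x t ≥ 0` and `∑ x t ≤ c`. -/
def bigSimplex (n : ℕ) (c : ℝ) : Set (Fin n → ℝ) :=
  {x | (∀ t, 0 ≤ x t) ∧ ∑ t, x t ≤ c}

/-- `K` is a triangulation with integer vertices of the polytope `P ⊆ ℝ^n`: a finite geometric
simplicial complex all of whose vertices lie in `ℤ^n` and whose underlying space is `P`. -/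
def IsIntTriangulation {n : ℕ} (K : Geometry.SimplicialComplex ℝ (Fin n → ℝ))
    (P : Set (Fin n → ℝ)) : Prop :=
  K.faces.Finite ∧ (∀ s ∈ K.faces, ∀ x ∈ s, IsLatticePoint x) ∧ K.space = P

namespace Stmt2Aux

open Finset

noncomputable section

variable {n : ℕ}

lemma mem_interior_bigSimplex {c : ℝ} {x : Fin n → ℝ}
    (h1 : ∀ t, 0 < x t) (h2 : ∑ t, x t < c) : x ∈ interior (bigSimplex n c) := by
  have hopen : IsOpen ({x : Fin n → ℝ | ∀ t, 0 < x t} ∩ {x | ∑ t, x t < c}) := by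
    apply IsOpen.inter
    · have : {x : Fin n → ℝ | ∀ t, 0 < x t} = ⋂ t, {x | 0 < x t} := by
        ext y; simp
      rw [this]
      exact isOpen_iInter_of_finite fun t => isOpen_lt continuous_const (continuous_apply t)
    · exact isOpen_lt (by fun_prop) continuous_const
  refine interior_maximal ?_ hopen ⟨h1, h2⟩
  rintro y ⟨hy1, hy2⟩
  exact ⟨fun t => (hy1 t).le, hy2.le⟩

lemma interior_bigSimplex_subset (hn : 0 < n) {c : ℝ} {x : Fin n → ℝ}
    (hx : x ∈ interior (bigSimplex n c)) : (∀ t, 0 < x t) ∧ ∑ t, x t < c := by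
  rw [mem_interior_iff_mem_nhds, Metric.mem_nhds_iff] at hx
  obtain ⟨ε, hε, hball⟩ := hx
  have hhalf : 0 < ε / 2 := by linarith
  constructor
  · intro t
    have hmem : (x - (ε / 2) • (Pi.single t 1 : Fin n → ℝ)) ∈ bigSimplex n c := by
      apply hball
      rw [Metric.mem_ball, dist_pi_lt_iff hε]
      intro i
      by_cases hi : i = t
      · subst hi
        simp only [Pi.sub_apply, Pi.smul_apply, Pi.single_eq_same, smul_eq_mul, mul_one,
          Real.dist_eq]
        rw [show x i - ε / 2 - x i = -(ε/2) by ring, abs_neg, abs_of_pos hhalf]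
        linarith
      · simp [Real.dist_eq, Pi.single_eq_of_ne hi, hε]
    have h0 := hmem.1 t
    simp at h0
    linarith
  · obtain ⟨t0⟩ : Nonempty (Fin n) := ⟨⟨0, hn⟩⟩
    have hmem : (x + (ε / 2) • (Pi.single t0 1 : Fin n → ℝ)) ∈ bigSimplex n c := by
      apply hball
      rw [Metric.mem_ball, dist_pi_lt_iff hε]
      intro i
      by_cases hi : i = t0
      · subst hi
        simp only [Pi.add_apply, Pi.smul_apply, Pi.single_eq_same, smul_eq_mul, mul_one,
          Real.dist_eq]
        rw [show x i + ε / 2 - x i = ε/2 by ring, abs_of_pos hhalf]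
        linarith
      · simp [Real.dist_eq, Pi.single_eq_of_ne hi, hε]
    have hsum := hmem.2
    simp only [Pi.add_apply] at hsum
    rw [Finset.sum_add_distrib] at hsum
    have : ∑ t, ((ε / 2) • (Pi.single t0 1 : Fin n → ℝ)) t = ε / 2 := by
      simp [Pi.single_apply]
    rw [this] at hsum
    linarith

/-- Uniqueness of convex combination weights for affinely independent finsets. -/
lemma uniq_weights {E : Type*} [AddCommGroup E] [Module ℝ E] {s : Finset E}
    (hs : AffineIndependent ℝ ((↑) : ↥s → E)) (w₁ w₂ : ↥s → ℝ)
    (h1 : ∑ i, w₁ i = 1) (h2 : ∑ i, w₂ i = 1)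
    (h : ∑ i, w₁ i • (i : E) = ∑ i, w₂ i • (i : E)) : w₁ = w₂ := by
  have key := hs.indicator_eq_of_affineCombination_eq Finset.univ Finset.univ w₁ w₂
      (by simpa using h1) (by simpa using h2) ?_
  · funext i
    have := congrFun key i
    simpa using this
  · rw [Finset.affineCombination_eq_linear_combination _ _ _ (by simpa using h1),
        Finset.affineCombination_eq_linear_combination _ _ _ (by simpa using h2)]
    exact h

/-- The `j`-th vertex of a face, under an arbitrary enumeration. -/
def vtx (s : Finset (Fin n → ℝ)) (j : Fin s.card) : Fin n → ℝ := ↑(s.equivFin.symm j)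

lemma vtx_mem (s : Finset (Fin n → ℝ)) (j : Fin s.card) : vtx s j ∈ s := (s.equivFin.symm j).2

/-- Integer version of the `j`-th vertex. -/
def ivtx (s : Finset (Fin n → ℝ)) (j : Fin s.card) : Fin n → ℤ := fun t => ⌊vtx s j t⌋

/-- The weights determined by a multiset `μ`: each of them is at least 1. -/
def wt {c d : ℕ} (μ : Sym (Fin c) d) (j : Fin c) : ℕ := Multiset.count j ↑μ + 1

lemma one_le_wt {c d : ℕ} (μ : Sym (Fin c) d) (j : Fin c) : 1 ≤ wt μ j :=
  Nat.le_add_left 1 _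

lemma sum_wt {c d : ℕ} (μ : Sym (Fin c) d) : ∑ j, wt μ j = d + c := by
  have h1 : ∑ j, Multiset.count j (μ : Multiset (Fin c)) = d := by
    calc ∑ j, Multiset.count j (μ : Multiset (Fin c))
        = ∑ a ∈ (μ : Multiset (Fin c)).toFinset, Multiset.count a (μ : Multiset (Fin c)) := by
          refine (Finset.sum_subset (Finset.subset_univ _) ?_).symm
          intro x _ hx
          simpa [Multiset.count_eq_zero] using hx
      _ = Multiset.card (μ : Multiset (Fin c)) := Multiset.toFinset_sum_count_eq _
      _ = d := μ.prop
  simp only [wt, Finset.sum_add_distrib, h1]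
  simp [Finset.card_univ]

/-- The lattice point associated to a face `s` and a multiset `μ`. -/
def ptInt (s : Finset (Fin n → ℝ)) (k : ℕ) (μ : Sym (Fin s.card) (k - s.card)) : Fin n → ℤ :=
  ∑ j, wt μ j • ivtx s j

/-- The real point associated to a face `s` and a multiset `μ`. -/
def ptReal (s : Finset (Fin n → ℝ)) (k : ℕ) (μ : Sym (Fin s.card) (k - s.card)) : Fin n → ℝ :=
  ∑ j, (wt μ j : ℝ) • vtx s j

lemma toReal_ptInt {s : Finset (Fin n → ℝ)} (hlat : ∀ x ∈ s, IsLatticePoint x) (k : ℕ)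
    (μ : Sym (Fin s.card) (k - s.card)) : toReal (ptInt s k μ) = ptReal s k μ := by
  funext t
  have hv : ∀ j : Fin s.card, ((ivtx s j t : ℤ) : ℝ) = vtx s j t := by
    intro j
    obtain ⟨z, hz⟩ := hlat _ (vtx_mem s j) t
    rw [ivtx, hz, Int.floor_intCast]
  simp only [toReal, ptInt, ptReal, Finset.sum_apply, Pi.smul_apply, smul_eq_mul]
  rw [Int.cast_sum]
  refine Finset.sum_congr rfl fun j _ => ?_
  rw [show wt μ j • ivtx s j t = (wt μ j : ℤ) * ivtx s j t from nsmul_eq_mul _ _]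
  push_cast
  rw [hv j]

lemma sum_wt_real {c d k : ℕ} (hcd : d = k - c) (hck : c ≤ k) (μ : Sym (Fin c) d) :
    ∑ j, (wt μ j : ℝ) = (k : ℝ) := by
  rw [← Nat.cast_sum]
  norm_cast
  rw [sum_wt, hcd]
  omega

/-- The rescaled point lies in the convex hull of the face. -/
lemma smul_ptReal_mem (s : Finset (Fin n → ℝ)) {k : ℕ} (hk : 0 < k) (hck : s.card ≤ k)
    (μ : Sym (Fin s.card) (k - s.card)) :
    (k : ℝ)⁻¹ • ptReal s k μ ∈ convexHull ℝ (s : Set (Fin n → ℝ)) := by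
  have hk' : (0:ℝ) < k := by exact_mod_cast hk
  refine mem_convexHull_of_exists_fintype (fun j => (wt μ j : ℝ) / k) (vtx s) ?_ ?_
    (fun j => vtx_mem s j) ?_
  · intro j
    positivity
  · rw [← Finset.sum_div, sum_wt_real rfl hck, div_self hk'.ne']
  · rw [ptReal, Finset.smul_sum]
    refine Finset.sum_congr rfl fun j _ => ?_
    simp only [smul_smul, div_eq_inv_mul]

/-- The subtype weight function of `(s, μ)`. -/
def wfun (s : Finset (Fin n → ℝ)) (k : ℕ) (μ : Sym (Fin s.card) (k - s.card)) (i : ↥s) : ℝ :=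
  (wt μ (s.equivFin i) : ℝ) / k

lemma wfun_pos {s : Finset (Fin n → ℝ)} {k : ℕ} (hk : 0 < k) (μ : Sym (Fin s.card) (k - s.card))
    (i : ↥s) : 0 < wfun s k μ i := by
  have hk' : (0:ℝ) < k := by exact_mod_cast hk
  have h1 : (1:ℝ) ≤ (wt μ (s.equivFin i) : ℝ) := by exact_mod_cast one_le_wt μ _
  exact div_pos (by linarith) hk'

lemma sum_wfun {s : Finset (Fin n → ℝ)} {k : ℕ} (hk : 0 < k) (hck : s.card ≤ k)
    (μ : Sym (Fin s.card) (k - s.card)) : ∑ i, wfun s k μ i = 1 := by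
  have hk' : (0:ℝ) < k := by exact_mod_cast hk
  unfold wfun
  rw [Equiv.sum_comp s.equivFin (fun j => (wt μ j : ℝ) / k), ← Finset.sum_div,
    sum_wt_real rfl hck, div_self hk'.ne']

lemma sum_wfun_smul {s : Finset (Fin n → ℝ)} {k : ℕ} (hk : 0 < k)
    (μ : Sym (Fin s.card) (k - s.card)) :
    ∑ i, wfun s k μ i • (i : Fin n → ℝ) = (k : ℝ)⁻¹ • ptReal s k μ := by
  unfold wfun
  rw [ptReal, Finset.smul_sum]
  have hvi : ∀ i : ↥s, (i : Fin n → ℝ) = vtx s (s.equivFin i) := fun i => by simp [vtx]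
  calc ∑ i : ↥s, ((wt μ (s.equivFin i) : ℝ) / k) • (i : Fin n → ℝ)
      = ∑ i : ↥s, ((wt μ (s.equivFin i) : ℝ) / k) • vtx s (s.equivFin i) := by
        refine Finset.sum_congr rfl fun i _ => ?_
        rw [← hvi i]
    _ = ∑ j, ((wt μ j : ℝ) / k) • vtx s j :=
        Equiv.sum_comp s.equivFin (fun j => ((wt μ j : ℝ) / k) • vtx s j)
    _ = ∑ j, (k:ℝ)⁻¹ • (wt μ j : ℝ) • vtx s j := by
        refine Finset.sum_congr rfl fun j _ => ?_
        rw [smul_smul, div_eq_inv_mul]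


lemma face_subset_of_ptReal_eq {k : ℕ} (hk : 0 < k)
    (K : Geometry.SimplicialComplex ℝ (Fin n → ℝ)) {s s' : Finset (Fin n → ℝ)}
    (hs : s ∈ K.faces) (hs' : s' ∈ K.faces) (hck : s.card ≤ k) (hck' : s'.card ≤ k)
    {μ : Sym (Fin s.card) (k - s.card)} {μ' : Sym (Fin s'.card) (k - s'.card)}
    (h : ptReal s k μ = ptReal s' k μ') : s ⊆ s' := by
  classical
  set q := (k : ℝ)⁻¹ • ptReal s k μ with hq
  have hq1 : q ∈ convexHull ℝ (s : Set (Fin n → ℝ)) := smul_ptReal_mem s hk hck μ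
  have hq2 : q ∈ convexHull ℝ (s' : Set (Fin n → ℝ)) := by
    rw [hq, h]; exact smul_ptReal_mem s' hk hck' μ'
  have hq3 : q ∈ convexHull ℝ ((s ∩ s' : Finset (Fin n → ℝ)) : Set (Fin n → ℝ)) := by
    have h0 := K.inter_subset_convexHull hs hs' ⟨hq1, hq2⟩
    rwa [← Finset.coe_inter] at h0
  obtain ⟨w, hw0, hw1, hwq⟩ := Finset.mem_convexHull'.mp hq3
  set W : (Fin n → ℝ) → ℝ := fun y => if y ∈ s' then w y else 0 with hW
  have hWsum : ∑ i : ↥s, W ↑i = 1 := by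
    rw [Finset.sum_coe_sort s W]
    simp only [hW]
    rw [← Finset.sum_filter, Finset.filter_mem_eq_inter]
    exact hw1
  have hWvec : ∑ i : ↥s, W ↑i • (i : Fin n → ℝ) = q := by
    rw [Finset.sum_coe_sort s (fun y => W y • y)]
    have hWy : ∀ y, W y • y = if y ∈ s' then w y • y else 0 := by
      intro y; simp only [hW]; split <;> simp
    rw [Finset.sum_congr rfl fun y _ => hWy y, ← Finset.sum_filter,
      Finset.filter_mem_eq_inter]
    exact hwq
  have huniq := uniq_weights (K.indep hs) (wfun s k μ) (fun i => W ↑i)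
      (sum_wfun hk hck μ) hWsum (by rw [sum_wfun_smul hk μ, hWvec])
  intro y hy
  by_contra hy'
  have h0 : W y = 0 := by simp only [hW]; simp [hy']
  have h1 := congrFun huniq ⟨y, hy⟩
  rw [h0] at h1
  exact (wfun_pos hk μ ⟨y, hy⟩).ne' h1

lemma mu_eq_of_ptReal_eq {k : ℕ} (hk : 0 < k)
    (K : Geometry.SimplicialComplex ℝ (Fin n → ℝ)) {s : Finset (Fin n → ℝ)}
    (hs : s ∈ K.faces) (hck : s.card ≤ k) {μ μ' : Sym (Fin s.card) (k - s.card)}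
    (h : ptReal s k μ = ptReal s k μ') : μ = μ' := by
  have huniq := uniq_weights (K.indep hs) (wfun s k μ) (wfun s k μ')
    (sum_wfun hk hck μ) (sum_wfun hk hck μ')
    (by rw [sum_wfun_smul hk μ, sum_wfun_smul hk μ', h])
  have hk' : (0:ℝ) < k := by exact_mod_cast hk
  have hcount : ∀ j, wt μ j = wt μ' j := by
    intro j
    have h1 := congrFun huniq (s.equivFin.symm j)
    unfold wfun at h1
    rw [Equiv.apply_symm_apply] at h1
    field_simp at h1
    exact_mod_cast h1
  apply Sym.coe_injective
  refine Multiset.ext.mpr fun j => ?_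
  have h3 := hcount j
  unfold wt at h3
  omega

lemma ptReal_mem_interior {m k : ℕ} (hk : 0 < k) {s : Finset (Fin n → ℝ)}
    (hck : s.card ≤ k)
    (hsub : ∀ y ∈ s, (∀ t, 0 ≤ y t) ∧ ∑ t, y t ≤ (m:ℝ))
    (hpos : ∀ t, ∃ y ∈ s, 0 < y t) (hstrict : ∃ y ∈ s, ∑ t, y t < (m:ℝ))
    (μ : Sym (Fin s.card) (k - s.card)) :
    ptReal s k μ ∈ interior (bigSimplex n ((k * m : ℕ) : ℝ)) := by
  have hwtpos : ∀ j, (0:ℝ) < (wt μ j : ℝ) := fun j => by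
    exact_mod_cast Nat.lt_of_lt_of_le Nat.zero_lt_one (one_le_wt μ j)
  apply mem_interior_bigSimplex
  · intro t
    rw [ptReal, Finset.sum_apply]
    obtain ⟨y, hy, hyt⟩ := hpos t
    refine Finset.sum_pos' (fun j _ => ?_) ⟨s.equivFin ⟨y, hy⟩, Finset.mem_univ _, ?_⟩
    · simp only [Pi.smul_apply, smul_eq_mul]
      exact mul_nonneg (hwtpos j).le ((hsub _ (vtx_mem s j)).1 t)
    · simp only [Pi.smul_apply, smul_eq_mul]
      have hv : vtx s (s.equivFin ⟨y, hy⟩) = y := by simp [vtx]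
      rw [hv]
      exact mul_pos (hwtpos _) hyt
  · rw [ptReal]
    have hsw : ∑ t, (∑ j, (wt μ j : ℝ) • vtx s j) t
        = ∑ j, (wt μ j : ℝ) * ∑ t, vtx s j t := by
      simp only [Finset.sum_apply, Pi.smul_apply, smul_eq_mul]
      rw [Finset.sum_comm]
      exact Finset.sum_congr rfl fun j _ => (Finset.mul_sum _ _ _).symm
    rw [hsw]
    obtain ⟨y, hy, hysum⟩ := hstrict
    have hlt : ∑ j, (wt μ j : ℝ) * ∑ t, vtx s j t < ∑ j, (wt μ j : ℝ) * m := by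
      refine Finset.sum_lt_sum (fun j _ => ?_) ⟨s.equivFin ⟨y, hy⟩, Finset.mem_univ _, ?_⟩
      · exact mul_le_mul_of_nonneg_left (hsub _ (vtx_mem s j)).2 (hwtpos j).le
      · have hv : vtx s (s.equivFin ⟨y, hy⟩) = y := by simp [vtx]
        rw [hv]
        exact (mul_lt_mul_iff_right₀ (hwtpos _)).mpr hysum
    calc ∑ j, (wt μ j : ℝ) * ∑ t, vtx s j t < ∑ j, (wt μ j : ℝ) * m := hlt
      _ = ((k * m : ℕ) : ℝ) := by
          rw [← Finset.sum_mul, sum_wt_real rfl hck]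
          push_cast
          ring

end

end Stmt2Aux

/-- Let `n`, `m`, `k` be positive integers and `K` a triangulation with integer
vertices of `Δ_m^n`. Let `s_i(K)` be the number of `i`-dimensional faces of `K` whose relative
interior is contained in the interior of `Δ_m^n`. Then the number of points of `ℤ^n` in the
interior of `k·Δ_m^n = Δ_{km}^n` is at least `∑_{i=0}^{k−1} C(k−1, i) · s_i(K)`. -/
theorem stmt2 (n m k : ℕ) (hn : 0 < n) (hm : 0 < m) (hk : 0 < k)
    (K : Geometry.SimplicialComplex ℝ (Fin n → ℝ))
    (hK : IsIntTriangulation K (bigSimplex n (m : ℝ))) :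
    ∑ i ∈ Finset.range k, (k - 1).choose i *
        {s | s ∈ K.faces ∧ s.card = i + 1 ∧
          intrinsicInterior ℝ (convexHull ℝ (s : Set (Fin n → ℝ))) ⊆
            interior (bigSimplex n (m : ℝ))}.ncard
      ≤ {p : Fin n → ℤ | toReal p ∈ interior (bigSimplex n ((k * m : ℕ) : ℝ))}.ncard := by
  classical
  open Stmt2Aux in
  obtain ⟨hfin, hlat, hspace⟩ := hK
  set cond : Finset (Fin n → ℝ) → Prop := fun s =>
    intrinsicInterior ℝ (convexHull ℝ (s : Set (Fin n → ℝ))) ⊆ interior (bigSimplex n (m : ℝ))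
    with hcond
  set S : Finset (Finset (Fin n → ℝ)) :=
    hfin.toFinset.filter (fun s => s.card ≤ k ∧ cond s) with hS
  have hSmem : ∀ s ∈ S, s ∈ K.faces ∧ s.card ≤ k ∧ cond s := by
    intro s hs
    rw [hS, Finset.mem_filter, Set.Finite.mem_toFinset] at hs
    exact ⟨hs.1, hs.2.1, hs.2.2⟩
  have hne : ∀ s ∈ K.faces, 1 ≤ s.card := by
    intro s hs
    rcases Finset.eq_empty_or_nonempty s with rfl | h
    · exact absurd hs K.empty_notMem
    · exact h.card_pos
  -- Step 1 : rewrite the left-hand side as a sum over `S`.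
  have hA : ∀ i ∈ Finset.range k, (k - 1).choose i *
      {s | s ∈ K.faces ∧ s.card = i + 1 ∧ cond s}.ncard
      = ∑ s ∈ S.filter (fun s => s.card - 1 = i), (k - 1).choose (s.card - 1) := by
    intro i hi
    rw [Finset.mem_range] at hi
    have hset : {s | s ∈ K.faces ∧ s.card = i + 1 ∧ cond s}
        = ↑(S.filter (fun s => s.card - 1 = i)) := by
      ext s
      simp only [Set.mem_setOf_eq, Finset.coe_filter, Set.mem_setOf_eq, hS,
        Finset.mem_filter, Set.Finite.mem_toFinset]
      constructor
      · rintro ⟨h1, h2, h3⟩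
        exact ⟨⟨h1, by omega, h3⟩, by omega⟩
      · rintro ⟨⟨h1, h2, h3⟩, h4⟩
        have h5 := hne s h1
        exact ⟨h1, by omega, h3⟩
    rw [hset, Set.ncard_coe_finset]
    rw [show ∑ s ∈ S.filter (fun s => s.card - 1 = i), (k-1).choose (s.card - 1)
        = ∑ s ∈ S.filter (fun s => s.card - 1 = i), (k-1).choose i from
      Finset.sum_congr rfl fun s hs => by rw [(Finset.mem_filter.mp hs).2]]
    rw [Finset.sum_const, smul_eq_mul, mul_comm]
  have hstep1 : ∑ i ∈ Finset.range k, (k - 1).choose i *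
      {s | s ∈ K.faces ∧ s.card = i + 1 ∧ cond s}.ncard
      = ∑ s ∈ S, (k - 1).choose (s.card - 1) := by
    rw [Finset.sum_congr rfl hA]
    exact Finset.sum_fiberwise_of_maps_to (fun s hs => by
      rw [Finset.mem_range]
      obtain ⟨h1, h2, _⟩ := hSmem s hs
      have h3 := hne s h1
      omega) _
  -- Per-face geometric facts.
  have hsubP : ∀ s ∈ K.faces, ∀ y ∈ s, (∀ t, 0 ≤ y t) ∧ ∑ t, y t ≤ (m:ℝ) := by
    intro s hs y hy
    have hy2 : y ∈ K.space := K.subset_space hs hy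
    rw [hspace] at hy2
    exact hy2
  have hrelint : ∀ s ∈ K.faces, cond s →
      (∀ t, ∃ y ∈ s, 0 < y t) ∧ (∃ y ∈ s, ∑ t, y t < (m:ℝ)) := by
    intro s hs hc
    have hsne : (convexHull ℝ (s : Set (Fin n → ℝ))).Nonempty := by
      obtain ⟨y, hy⟩ := Finset.card_pos.mp (hne s hs)
      exact ⟨y, subset_convexHull ℝ _ (by exact_mod_cast hy)⟩
    obtain ⟨q, hq⟩ := hsne.intrinsicInterior (convex_convexHull ℝ _)
    have hqint := hc hq
    have hqs : q ∈ convexHull ℝ (s : Set (Fin n → ℝ)) := intrinsicInterior_subset hq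
    have hqprop := Stmt2Aux.interior_bigSimplex_subset hn hqint
    constructor
    · intro t
      by_contra hcon
      push_neg at hcon
      have hzero : ∀ y ∈ s, y t = 0 := fun y hy =>
        le_antisymm (hcon y hy) ((hsubP s hs y hy).1 t)
      have hlin : IsLinearMap ℝ (fun x : Fin n → ℝ => x t) :=
        ⟨fun a b => rfl, fun c a => rfl⟩
      have hsubhp : convexHull ℝ (s : Set (Fin n → ℝ)) ⊆ {x | x t = 0} := by
        apply convexHull_min
        · intro y hy
          exact hzero y (by exact_mod_cast hy)
        · exact convex_hyperplane hlin 0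
      have h1 := hsubhp hqs
      have h2 := hqprop.1 t
      rw [Set.mem_setOf_eq] at h1
      linarith
    · by_contra hcon
      push_neg at hcon
      have hall : ∀ y ∈ s, ∑ t, y t = (m:ℝ) := fun y hy =>
        le_antisymm ((hsubP s hs y hy).2) (hcon y hy)
      have hlin : IsLinearMap ℝ (fun x : Fin n → ℝ => ∑ t, x t) := by
        constructor
        · intro a b
          simp [Finset.sum_add_distrib]
        · intro c a
          simp [Finset.mul_sum]
      have hsubhp : convexHull ℝ (s : Set (Fin n → ℝ)) ⊆ {x | ∑ t, x t = (m:ℝ)} := by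
        apply convexHull_min
        · intro y hy
          exact hall y (by exact_mod_cast hy)
        · exact convex_hyperplane hlin (m:ℝ)
      have h1 := hsubhp hqs
      have h2 := hqprop.2
      rw [Set.mem_setOf_eq] at h1
      linarith
  -- Finiteness of the target set.
  set L : Set (Fin n → ℤ) := {p | toReal p ∈ interior (bigSimplex n ((k * m : ℕ) : ℝ))} with hL
  have hLfin : L.Finite := by
    apply Set.Finite.subset (Set.Finite.pi (t := fun _ : Fin n => Set.Icc (0:ℤ) (k*m))
      (fun t => Set.finite_Icc _ _))
    intro p hp
    have hmem := interior_subset hp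
    rw [Set.mem_pi]
    intro t _
    rw [Set.mem_Icc]
    constructor
    · have h0 : (0:ℝ) ≤ (p t : ℝ) := hmem.1 t
      exact_mod_cast h0
    · have h1 : (p t : ℝ) ≤ ∑ t', toReal p t' :=
        Finset.single_le_sum (fun t' _ => hmem.1 t') (Finset.mem_univ t)
      have h2 : (p t : ℝ) ≤ ((k*m : ℕ) : ℝ) := le_trans h1 hmem.2
      exact_mod_cast h2
  -- The big union of lattice points.
  set B : Finset (Fin n → ℤ) :=
    S.biUnion (fun s => Finset.image (Stmt2Aux.ptInt s k) Finset.univ) with hB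
  have hBsub : ↑B ⊆ L := by
    intro p hp
    rw [Finset.mem_coe, hB, Finset.mem_biUnion] at hp
    obtain ⟨s, hsS, hps⟩ := hp
    obtain ⟨μ, _, rfl⟩ := Finset.mem_image.mp hps
    obtain ⟨hsf, hsk, hsc⟩ := hSmem s hsS
    obtain ⟨hpos, hstrict⟩ := hrelint s hsf hsc
    show toReal (Stmt2Aux.ptInt s k μ) ∈ interior (bigSimplex n ((k * m : ℕ) : ℝ))
    rw [Stmt2Aux.toReal_ptInt (hlat s hsf) k μ]
    exact Stmt2Aux.ptReal_mem_interior hk hsk (hsubP s hsf) hpos hstrict μ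
  have hptInj : ∀ s ∈ S, Function.Injective (Stmt2Aux.ptInt s k) := by
    intro s hsS μ μ' hμ
    obtain ⟨hsf, hsk, _⟩ := hSmem s hsS
    apply Stmt2Aux.mu_eq_of_ptReal_eq hk K hsf hsk
    rw [← Stmt2Aux.toReal_ptInt (hlat s hsf), ← Stmt2Aux.toReal_ptInt (hlat s hsf), hμ]
  have hcard : ∀ s ∈ S, (Finset.image (Stmt2Aux.ptInt s k) Finset.univ).card
      = (k-1).choose (s.card - 1) := by
    intro s hsS
    obtain ⟨hsf, hsk, _⟩ := hSmem s hsS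
    have h1 := hne s hsf
    rw [Finset.card_image_of_injective _ (hptInj s hsS), Finset.card_univ,
      Sym.card_sym_eq_choose, Fintype.card_fin]
    have e1 : s.card + (k - s.card) - 1 = k - 1 := by omega
    rw [e1]
    have e2 : k - s.card = (k-1) - (s.card - 1) := by omega
    rw [e2, Nat.choose_symm (by omega)]
  have hdisj : ∀ s ∈ S, ∀ s' ∈ S, s ≠ s' →
      Disjoint (Finset.image (Stmt2Aux.ptInt s k) Finset.univ)
        (Finset.image (Stmt2Aux.ptInt s' k) Finset.univ) := by
    intro s hsS s' hsS' hne'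
    rw [Finset.disjoint_left]
    intro p hp hp'
    obtain ⟨μ, _, hμ⟩ := Finset.mem_image.mp hp
    obtain ⟨μ', _, hμ'⟩ := Finset.mem_image.mp hp'
    obtain ⟨hsf, hsk, _⟩ := hSmem s hsS
    obtain ⟨hsf', hsk', _⟩ := hSmem s' hsS'
    have heq : Stmt2Aux.ptReal s k μ = Stmt2Aux.ptReal s' k μ' := by
      rw [← Stmt2Aux.toReal_ptInt (hlat s hsf), ← Stmt2Aux.toReal_ptInt (hlat s' hsf'),
        hμ, hμ']
    exact hne' (Finset.Subset.antisymm
      (Stmt2Aux.face_subset_of_ptReal_eq hk K hsf hsf' hsk hsk' heq)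
      (Stmt2Aux.face_subset_of_ptReal_eq hk K hsf' hsf hsk' hsk heq.symm))
  calc ∑ i ∈ Finset.range k, (k - 1).choose i *
        {s | s ∈ K.faces ∧ s.card = i + 1 ∧ cond s}.ncard
      = ∑ s ∈ S, (k - 1).choose (s.card - 1) := hstep1
    _ = ∑ s ∈ S, (Finset.image (Stmt2Aux.ptInt s k) Finset.univ).card :=
        Finset.sum_congr rfl fun s hs => (hcard s hs).symm
    _ = B.card := (Finset.card_biUnion hdisj).symm
    _ = (↑B : Set (Fin n → ℤ)).ncard := (Set.ncard_coe_finset B).symm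
    _ ≤ L.ncard := Set.ncard_le_ncard hBsub hLfin
end

section
/- Let n ≥ 3 be an integer and let w_0, ..., w_{n−1} be points of ℤ^n such that the vectors w_1 − w_0, ..., w_{n−1} − w_0 can be extended to a ℤ-basis of ℤ^n. Then the relative interior of the dilated simplex conv{2·w_0, ..., 2·w_{n−1}} contains no point of ℤ^n. -/
/-- If an affine functional (given as constant + linear in coordinates) is nonnegative on `s`,
vanishes at `p`, and is positive somewhere on `s`, then `p` is not in the intrinsic interior. -/
lemma aux_not_mem {n : ℕ} (s : Set (Fin n → ℝ)) (k : Fin n → ℝ) (e : ℝ)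
    (hf : ∀ x ∈ s, 0 ≤ e + ∑ t, k t * x t)
    (p y : Fin n → ℝ) (hy : y ∈ s) (hypos : 0 < e + ∑ t, k t * y t)
    (hp : e + ∑ t, k t * p t = 0) : p ∉ intrinsicInterior ℝ s := by
  intro hmem
  rw [mem_intrinsicInterior] at hmem
  obtain ⟨q, hq, hqp⟩ := hmem
  have hpspan : p ∈ affineSpan ℝ s := hqp ▸ q.2
  have hyspan : y ∈ affineSpan ℝ s := subset_affineSpan ℝ s hy
  have hmemline : ∀ t : ℝ, t • (y - p) + p ∈ affineSpan ℝ s := by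
    intro t
    have := AffineSubspace.smul_vsub_vadd_mem (affineSpan ℝ s) t hyspan hpspan hpspan
    simpa [vsub_eq_sub, vadd_eq_add] using this
  set G : ℝ → (affineSpan ℝ s : Set (Fin n → ℝ)) := fun t => ⟨t • (y - p) + p, hmemline t⟩ with hG
  have hGcont : Continuous G := by
    apply Continuous.subtype_mk
    fun_prop
  have hG0 : G 0 = q := by
    apply Subtype.ext
    simp [hG, hqp]
  have hnhds : G ⁻¹' (interior (((↑) : _ → (Fin n → ℝ)) ⁻¹' s)) ∈ nhds (0 : ℝ) := by
    apply hGcont.continuousAt.preimage_mem_nhds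
    exact isOpen_interior.mem_nhds (by rw [hG0]; exact hq)
  obtain ⟨ε, hε, hball⟩ := Metric.mem_nhds_iff.mp hnhds
  have htmem : (-(ε/2)) ∈ Metric.ball (0:ℝ) ε := by
    rw [Metric.mem_ball, Real.dist_eq, sub_zero, abs_neg, abs_of_pos (by linarith)]
    linarith
  have hGt : G (-(ε/2)) ∈ interior (((↑) : _ → (Fin n → ℝ)) ⁻¹' s) := hball htmem
  set t : ℝ := -(ε/2) with ht
  have hins : (t • (y - p) + p) ∈ s := by
    have := interior_subset hGt
    exact this
  have := hf _ hins
  have hval : e + ∑ i, k i * ((t • (y - p) + p) i) = t * (e + ∑ i, k i * y i) := by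
    have h1 : ∀ i, k i * ((t • (y - p) + p) i) = k i * p i + t * (k i * y i) - t * (k i * p i) := by
      intro i; simp [Pi.smul_apply, Pi.add_apply, Pi.sub_apply, smul_eq_mul]; ring
    rw [Finset.sum_congr rfl (fun i _ => h1 i)]
    rw [Finset.sum_sub_distrib, Finset.sum_add_distrib, ← Finset.mul_sum, ← Finset.mul_sum]
    have hsp : ∑ i, k i * p i = -e := by linarith
    rw [hsp]; ring
  rw [hval] at this
  have htneg : t < 0 := by rw [ht]; linarith
  nlinarith [mul_neg_of_neg_of_pos htneg hypos]


lemma aux_weights {n : ℕ} (v : Fin n → Fin n → ℝ) {x : Fin n → ℝ}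
    (hx : x ∈ convexHull ℝ (Set.range v)) :
    ∃ c : Fin n → ℝ, (∀ j, 0 ≤ c j) ∧ (∑ j, c j = 1) ∧ ∀ t, x t = ∑ j, c j * v j t := by
  rw [convexHull_range_eq_exists_affineCombination] at hx
  obtain ⟨s, wgt, h0, h1, hx⟩ := hx
  refine ⟨Set.indicator ↑s wgt, ?_, ?_, ?_⟩
  · intro j
    by_cases h : j ∈ s
    · simpa [Set.indicator_of_mem, h] using h0 j h
    · simp [Set.indicator_of_notMem, h]
  · rw [← Finset.sum_indicator_subset wgt s.subset_univ] at h1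
    exact h1
  · have hsum1 : ∑ j, Set.indicator (↑s) wgt j = 1 := by
      rw [← Finset.sum_indicator_subset wgt s.subset_univ] at h1; exact h1
    have := Finset.affineCombination_indicator_subset (k := ℝ) wgt v s.subset_univ
    rw [this, Finset.affineCombination_eq_linear_combination _ _ _ hsum1] at hx
    intro t
    rw [← hx]
    simp [Finset.sum_apply]


lemma aux_comb {n : ℕ} (k : Fin n → ℝ) (e : ℝ) (c : Fin n → ℝ) (V : Fin n → Fin n → ℝ)
    (x : Fin n → ℝ) (hc1 : ∑ j, c j = 1) (hx : ∀ t, x t = ∑ j, c j * V j t) :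
    e + ∑ t, k t * x t = ∑ j, c j * (e + ∑ t, k t * V j t) := by
  have h1 : ∑ t, k t * x t = ∑ j, c j * ∑ t, k t * V j t := by
    rw [Finset.sum_congr rfl fun t _ => by rw [hx t, Finset.mul_sum], Finset.sum_comm]
    exact Finset.sum_congr rfl fun j _ => by rw [Finset.mul_sum]; exact Finset.sum_congr rfl fun t _ => by ring
  rw [h1]
  rw [Finset.sum_congr rfl fun j _ => (mul_add (c j) e _)]
  rw [Finset.sum_add_distrib, ← Finset.sum_mul, hc1, one_mul]

lemma aux_convex {n : ℕ} (k : Fin n → ℝ) (e : ℝ) :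
    Convex ℝ {x : Fin n → ℝ | 0 ≤ e + ∑ t, k t * x t} := by
  intro x hx y hy a b ha hb hab
  simp only [Set.mem_setOf_eq] at *
  have : e + ∑ t, k t * (a • x + b • y) t = a * (e + ∑ t, k t * x t) + b * (e + ∑ t, k t * y t) := by
    simp only [Pi.add_apply, Pi.smul_apply, smul_eq_mul]
    rw [Finset.sum_congr rfl fun t _ => show k t * (a * x t + b * y t) = a * (k t * x t) + b * (k t * y t) by ring]
    rw [Finset.sum_add_distrib, ← Finset.mul_sum, ← Finset.mul_sum]
    linear_combination (-e) * hab
  rw [this]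
  positivity

/-- Let `n ≥ 3` and let `w 0, ..., w (n−1)` be points of `ℤ^n` such that the
vectors `w 1 − w 0, ..., w (n−1) − w 0` can be extended to a `ℤ`-basis of `ℤ^n` (i.e. there is a
vector `u` completing them into a matrix of unit determinant). Then the relative interior of the
dilated simplex `conv{2·w 0, ..., 2·w (n−1)}` contains no point of `ℤ^n`. -/
theorem stmt7 (n : ℕ) (hn : 3 ≤ n) (w : Fin n → Fin n → ℤ)
    (hbasis : ∃ u : Fin n → ℤ,
      IsUnit (Matrix.det (Matrix.of fun j t : Fin n =>
        if h : (j : ℕ) + 1 < n then w ⟨(j : ℕ) + 1, h⟩ t - w ⟨0, by omega⟩ t else u t))) :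
    ∀ p : Fin n → ℤ,
      toReal p ∉ intrinsicInterior ℝ
        (convexHull ℝ (Set.range fun j => toReal (2 • w j))) := by
  have hn0 : 0 < n := by omega
  haveI : NeZero n := ⟨by omega⟩
  obtain ⟨u, hu⟩ := hbasis
  set z0 : Fin n := ⟨0, hn0⟩ with hz0
  set M : Matrix (Fin n) (Fin n) ℤ := Matrix.of fun j t : Fin n =>
      if h : (j : ℕ) + 1 < n then w ⟨(j : ℕ) + 1, h⟩ t - w z0 t else u t with hM
  have hUnitM : IsUnit M := (Matrix.isUnit_iff_isUnit_det M).mpr hu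
  obtain ⟨U, hU⟩ := hUnitM
  set N : Matrix (Fin n) (Fin n) ℤ := ↑U⁻¹ with hN
  have hMN : M * N = 1 := by rw [hN, ← hU]; exact U.mul_inv
  have hNM : N * M = 1 := by rw [hN, ← hU]; exact U.inv_mul
  -- cast version of M * N = 1
  have hMNr : ∀ j s : Fin n, ∑ t, (M j t : ℝ) * (N t s : ℝ) = if j = s then 1 else 0 := by
    intro j s
    have h1 : ∑ t, M j t * N t s = if j = s then 1 else 0 := by
      have := congrFun (congrFun hMN j) s
      simpa [Matrix.mul_apply, Matrix.one_apply] using this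
    have h2 := congrArg (fun z : ℤ => (z : ℝ)) h1
    push_cast at h2
    simpa using h2
  intro p hmem
  have hp_hull : toReal p ∈ convexHull ℝ (Set.range fun j => toReal (2 • w j)) :=
    intrinsicInterior_subset hmem
  obtain ⟨c, hc0, hc1, hcx⟩ := aux_weights _ hp_hull
  -- hcx : ∀ t, toReal p t = ∑ j, c j * toReal (2 • w j) t
  have hcx' : ∀ t, (p t : ℝ) = ∑ j, c j * (2 * (w j t : ℝ)) := by
    intro t
    have := hcx t
    simpa [toReal] using this
  -- the value of 1 + j
  have hval1 : ∀ j : Fin n, ((1 + j : Fin n) : ℕ) = if (j:ℕ) + 1 < n then (j:ℕ)+1 else 0 := by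
    intro j
    have hj := j.isLt
    rw [Fin.val_add, Fin.val_one']
    rw [Nat.mod_eq_of_lt (show 1 < n by omega)]
    by_cases h : (j:ℕ) + 1 < n
    · rw [if_pos h, Nat.mod_eq_of_lt (by omega)]; omega
    · rw [if_neg h]
      have h2 : 1 + (j:ℕ) = n := by omega
      rw [h2, Nat.mod_self]
  -- step 1 : linear relation between weights and rows of M
  have step1 : ∀ t : Fin n, (p t : ℝ) - 2 * (w z0 t : ℝ) =
      ∑ j : Fin n, (if h : (j:ℕ) + 1 < n then 2 * c ⟨(j:ℕ)+1, h⟩ else 0) * (M j t : ℝ) := by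
    intro t
    have hF : ∀ j : Fin n, (if h : (j:ℕ) + 1 < n then 2 * c ⟨(j:ℕ)+1, h⟩ else 0) * (M j t : ℝ)
        = 2 * c (1 + j) * ((w (1 + j) t : ℝ) - (w z0 t : ℝ)) := by
      intro j
      by_cases h : (j:ℕ) + 1 < n
      · have hjj : (1 + j : Fin n) = ⟨(j:ℕ)+1, h⟩ := by
          apply Fin.ext; rw [hval1 j, if_pos h]
        rw [dif_pos h, hjj, hM]
        simp only [Matrix.of_apply]
        rw [dif_pos h]
        push_cast
        ring
      · have hjj : (1 + j : Fin n) = z0 := by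
          apply Fin.ext; rw [hval1 j, if_neg h]
        rw [dif_neg h, hjj]
        simp
    rw [Finset.sum_congr rfl fun j _ => hF j]
    rw [Fintype.sum_equiv (Equiv.addLeft (1 : Fin n))
      (fun j => 2 * c (1 + j) * ((w (1 + j) t : ℝ) - (w z0 t : ℝ)))
      (fun j => 2 * c j * ((w j t : ℝ) - (w z0 t : ℝ))) (fun j => by simp [Equiv.addLeft])]
    have expand : ∀ j : Fin n, 2 * c j * ((w j t : ℝ) - (w z0 t : ℝ))
        = c j * (2 * (w j t : ℝ)) - (c j) * (2 * (w z0 t : ℝ)) := fun j => by ring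
    rw [Finset.sum_congr rfl fun j _ => expand j, Finset.sum_sub_distrib, ← Finset.sum_mul, hc1]
    rw [← hcx' t]
    ring
  -- step 2 : the weights are (half-)integers
  have step2 : ∀ s' : Fin n, (if h : (s':ℕ) + 1 < n then 2 * c ⟨(s':ℕ)+1, h⟩ else 0)
      = ((∑ t, (p t - 2 * w z0 t) * N t s' : ℤ) : ℝ) := by
    intro s'
    have e1 : (if h : (s':ℕ) + 1 < n then 2 * c ⟨(s':ℕ)+1, h⟩ else 0)
        = ∑ j : Fin n, (if h : (j:ℕ) + 1 < n then 2 * c ⟨(j:ℕ)+1, h⟩ else 0)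
          * (if j = s' then (1:ℝ) else 0) := by
      simp [mul_ite, Finset.sum_ite_eq']
    rw [e1, Finset.sum_congr rfl fun j _ => by rw [← hMNr j s']]
    have e2 : ∑ j : Fin n, (if h : (j:ℕ) + 1 < n then 2 * c ⟨(j:ℕ)+1, h⟩ else 0)
          * ∑ t, (M j t : ℝ) * (N t s' : ℝ)
        = ∑ t, ((p t : ℝ) - 2 * (w z0 t : ℝ)) * (N t s' : ℝ) := by
      rw [Finset.sum_congr rfl fun j (_ : j ∈ Finset.univ) => Finset.mul_sum ..]
      rw [Finset.sum_comm]
      rw [Finset.sum_congr rfl fun t _ => by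
        rw [Finset.sum_congr rfl fun j (_ : j ∈ Finset.univ) => (mul_assoc .. ).symm,
          ← Finset.sum_mul, ← step1 t]]
    rw [e2]
    push_cast
    rfl
  -- there is a zero weight
  have hzero : ∃ m : Fin n, c m = 0 := by
    by_contra hno
    push_neg at hno
    have hpos : ∀ j : Fin n, 0 < c j := fun j => lt_of_le_of_ne (hc0 j) (Ne.symm (hno j))
    have hhalf : ∀ j : Fin n, j ≠ z0 → (1:ℝ)/2 ≤ c j := by
      intro j hj
      have hjval : 0 < (j : ℕ) := by
        rcases Nat.eq_zero_or_pos (j : ℕ) with h | h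
        · exact absurd (Fin.ext h) hj
        · exact h
      set s' : Fin n := ⟨(j:ℕ) - 1, by omega⟩ with hs'
      have hs1 : (s' : ℕ) + 1 < n := by simp [hs']; omega
      have hjs : (⟨(s':ℕ)+1, hs1⟩ : Fin n) = j := by apply Fin.ext; simp [hs']; omega
      have := step2 s'
      rw [dif_pos hs1, hjs] at this
      set A : ℤ := ∑ t, (p t - 2 * w z0 t) * N t s' with hA
      have hApos : (0:ℝ) < (A:ℝ) := by rw [← this]; linarith [hpos j]
      have hA1 : (1:ℤ) ≤ A := by exact_mod_cast hApos
      have : (1:ℝ) ≤ (A:ℝ) := by exact_mod_cast hA1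
      linarith [this, (step2 s').symm ▸ this]
    -- sum of weights exceeds 1
    have hsplit : c z0 + ∑ j ∈ Finset.univ.erase z0, c j = 1 := by
      rw [Finset.add_sum_erase _ c (Finset.mem_univ z0)]
      exact hc1
    have hcard : (Finset.univ.erase z0).card = n - 1 := by
      rw [Finset.card_erase_of_mem (Finset.mem_univ z0), Finset.card_univ, Fintype.card_fin]
    have hge : ((n:ℝ) - 1) * (1/2) ≤ ∑ j ∈ Finset.univ.erase z0, c j := by
      have := Finset.card_nsmul_le_sum (Finset.univ.erase z0) c (1/2)
        (fun j hj => hhalf j (Finset.ne_of_mem_erase hj))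
      rw [hcard] at this
      have hcast : ((n - 1 : ℕ) : ℝ) = (n:ℝ) - 1 := by
        have : (1:ℕ) ≤ n := by omega
        push_cast [this]; ring
      calc ((n:ℝ) - 1) * (1/2) = ((n-1:ℕ):ℝ) * (1/2) := by rw [hcast]
        _ = (n-1:ℕ) • ((1:ℝ)/2) := by rw [nsmul_eq_mul]
        _ ≤ _ := this
    have hn3 : (3:ℝ) ≤ (n:ℝ) := by exact_mod_cast hn
    nlinarith [hpos z0]
  obtain ⟨m, hm⟩ := hzero
  -- values of the coordinate sums at the vertices
  have hS0 : ∀ s' : Fin n, ∑ t, (toReal (2 • w z0) t - 2 * (w z0 t : ℝ)) * (N t s' : ℝ) = 0 := by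
    intro s'
    apply Finset.sum_eq_zero
    intro t _
    have : toReal (2 • w z0) t - 2 * (w z0 t : ℝ) = 0 := by
      simp only [toReal, Pi.smul_apply, nsmul_eq_mul]
      push_cast
      ring
    rw [this, zero_mul]
  have hSj : ∀ (j' : Fin n) (h : (j':ℕ) + 1 < n) (s' : Fin n),
      ∑ t, (toReal (2 • w ⟨(j':ℕ)+1, h⟩) t - 2 * (w z0 t : ℝ)) * (N t s' : ℝ)
        = 2 * (if j' = s' then 1 else 0) := by
    intro j' h s'
    have hterm : ∀ t, toReal (2 • w ⟨(j':ℕ)+1, h⟩) t - 2 * (w z0 t : ℝ) = 2 * (M j' t : ℝ) := by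
      intro t
      rw [hM]
      simp only [Matrix.of_apply]
      rw [dif_pos h]
      simp only [toReal, Pi.smul_apply, nsmul_eq_mul]
      push_cast
      ring
    rw [Finset.sum_congr rfl fun t _ => by rw [hterm t, mul_assoc]]
    rw [← Finset.mul_sum, hMNr j' s']
  -- assembly: a coordinate functional vanishing at p, positive at vertex m, ≥ 0 on hull
  have key : ∀ (k : Fin n → ℝ) (e : ℝ),
      (∀ j, e + ∑ t, k t * toReal (2 • w j) t = if j = m then 1 else 0) → False := by
    intro k e hvertex
    have hfp : e + ∑ t, k t * toReal p t = 0 := by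
      rw [aux_comb k e c (fun j => toReal (2 • w j)) (toReal p) hc1 hcx]
      rw [Finset.sum_congr rfl fun j _ => by rw [hvertex j]]
      simp [mul_ite, Finset.sum_ite_eq', hm]
    have hf : ∀ x ∈ convexHull ℝ (Set.range fun j => toReal (2 • w j)),
        0 ≤ e + ∑ t, k t * x t := by
      intro x hx
      have hsub : convexHull ℝ (Set.range fun j => toReal (2 • w j))
          ⊆ {x : Fin n → ℝ | 0 ≤ e + ∑ t, k t * x t} := by
        apply convexHull_min _ (aux_convex k e)
        rintro x ⟨j, rfl⟩
        simp only [Set.mem_setOf_eq]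
        rw [hvertex j]
        split <;> norm_num
      exact hsub hx
    have hymem : toReal (2 • w m) ∈ convexHull ℝ (Set.range fun j => toReal (2 • w j)) :=
      subset_convexHull ℝ _ ⟨m, rfl⟩
    have hypos : 0 < e + ∑ t, k t * toReal (2 • w m) t := by
      rw [hvertex m, if_pos rfl]; norm_num
    exact aux_not_mem _ k e hf (toReal p) (toReal (2 • w m)) hymem hypos hfp hmem
  by_cases hm0 : m = z0
  · -- the zero weight is at index 0
    subst hm0
    set T : Finset (Fin n) := Finset.univ.filter (fun s' : Fin n => (s':ℕ) + 1 < n) with hT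
    apply key (fun t => -(1/2) * ∑ s' ∈ T, (N t s' : ℝ))
      (1 + ∑ t, (w z0 t : ℝ) * ∑ s' ∈ T, (N t s' : ℝ))
    intro j
    have hfact : ∀ x : Fin n → ℝ,
        (1 + ∑ t, (w z0 t : ℝ) * ∑ s' ∈ T, (N t s' : ℝ))
          + ∑ t, (-(1/2) * ∑ s' ∈ T, (N t s' : ℝ)) * x t
        = 1 - (1/2) * ∑ s' ∈ T, ∑ t, (x t - 2 * (w z0 t : ℝ)) * (N t s' : ℝ) := by
      intro x
      have inner : ∀ t : Fin n, ∑ s' ∈ T, (x t - 2 * (w z0 t : ℝ)) * (N t s' : ℝ)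
          = (x t - 2 * (w z0 t : ℝ)) * ∑ s' ∈ T, (N t s' : ℝ) :=
        fun t => (Finset.mul_sum _ _ _).symm
      rw [Finset.sum_comm (s := T), Finset.sum_congr rfl fun t _ => inner t, Finset.mul_sum]
      rw [Finset.sum_congr rfl fun t _ => show
          (1/2:ℝ) * ((x t - 2 * (w z0 t : ℝ)) * ∑ s' ∈ T, (N t s' : ℝ))
          = -((-(1/2) * ∑ s' ∈ T, (N t s' : ℝ)) * x t) - (w z0 t : ℝ) * ∑ s' ∈ T, (N t s' : ℝ)
          from by ring]
      rw [Finset.sum_sub_distrib, Finset.sum_neg_distrib]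
      ring
    rw [hfact]
    by_cases hj0 : (j:ℕ) = 0
    · have hjz : j = z0 := Fin.ext hj0
      rw [hjz, if_pos rfl]
      rw [Finset.sum_congr rfl fun s' _ => hS0 s']
      simp
    · have hj1 : (j:ℕ) - 1 + 1 < n := by have := j.isLt; omega
      have hjj : j = ⟨(j:ℕ) - 1 + 1, hj1⟩ := Fin.ext (by simp; omega)
      have hjm : ¬ (j = z0) := fun h => hj0 (by rw [h])
      rw [if_neg hjm, hjj]
      rw [Finset.sum_congr rfl fun s' _ => hSj ⟨(j:ℕ) - 1, by omega⟩ hj1 s']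
      have hmemT : (⟨(j:ℕ) - 1, by omega⟩ : Fin n) ∈ T := by
        rw [hT, Finset.mem_filter]
        exact ⟨Finset.mem_univ _, by simpa using hj1⟩
      rw [Finset.sum_congr rfl fun s' _ => show
          (2:ℝ) * (if (⟨(j:ℕ) - 1, by omega⟩ : Fin n) = s' then 1 else 0)
          = if (⟨(j:ℕ) - 1, by omega⟩ : Fin n) = s' then 2 else 0 from by split <;> norm_num]
      rw [Finset.sum_ite_eq T _ (fun _ => (2:ℝ)), if_pos hmemT]
      norm_num
  · -- the zero weight is at a positive index
    have hmval : 0 < (m:ℕ) := by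
      rcases Nat.eq_zero_or_pos (m:ℕ) with h | h
      · exact absurd (Fin.ext h) hm0
      · exact h
    set m' : Fin n := ⟨(m:ℕ) - 1, by have := m.isLt; omega⟩ with hm'
    apply key (fun t => (N t m' : ℝ) / 2) (-∑ t, (w z0 t : ℝ) * (N t m' : ℝ))
    intro j
    have hfact : ∀ x : Fin n → ℝ,
        (-∑ t, (w z0 t : ℝ) * (N t m' : ℝ)) + ∑ t, ((N t m' : ℝ) / 2) * x t
        = (1/2) * ∑ t, (x t - 2 * (w z0 t : ℝ)) * (N t m' : ℝ) := by
      intro x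
      rw [Finset.mul_sum]
      rw [Finset.sum_congr rfl fun t _ => show
          (1/2) * ((x t - 2 * (w z0 t : ℝ)) * (N t m' : ℝ))
          = ((N t m' : ℝ) / 2) * x t - (w z0 t : ℝ) * (N t m' : ℝ) from by ring]
      rw [Finset.sum_sub_distrib]
      ring
    rw [hfact]
    by_cases hj0 : (j:ℕ) = 0
    · have hjz : j = z0 := Fin.ext hj0
      have hjm : ¬ (j = m) := fun h => hm0 (h ▸ hjz : m = z0)
      rw [if_neg hjm, hjz, hS0 m', mul_zero]
    · have hj1 : (j:ℕ) - 1 + 1 < n := by have := j.isLt; omega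
      have hjj : j = ⟨(j:ℕ) - 1 + 1, hj1⟩ := Fin.ext (by simp; omega)
      rw [hjj, hSj ⟨(j:ℕ) - 1, by omega⟩ hj1 m']
      by_cases hjm : j = m
      · have : (⟨(j:ℕ) - 1, by omega⟩ : Fin n) = m' := by
          apply Fin.ext; simp [hm']; rw [hjm]
        rw [if_pos this, if_pos (hjj ▸ hjm : (⟨(j:ℕ) - 1 + 1, hj1⟩ : Fin n) = m)]
        norm_num
      · have : ¬ ((⟨(j:ℕ) - 1, by omega⟩ : Fin n) = m') := by
          intro h
          apply hjm
          apply Fin.ext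
          have h1 : (j:ℕ) - 1 = (m:ℕ) - 1 := by
            have := congrArg Fin.val h; simpa [hm'] using this
          omega
        rw [if_neg this, if_neg (fun h => hjm (hjj ▸ h : j = m))]
        norm_num
end

section
/- Let n ≥ 2 be an integer and let w_0, ..., w_{n−1}, u_1, u_2 be points of ℤ^n such that both families of vectors (w_1 − w_0, ..., w_{n−1} − w_0, u_1 − w_0) and (w_1 − w_0, ..., w_{n−1} − w_0, u_2 − w_0) are ℤ-bases of ℤ^n, and such that u_1 and u_2 lie strictly on opposite sides of the affine hyperplane H spanned by w_0, ..., w_{n−1}. Then the point u_1 + u_2 (the midpoint of the segment joining 2·u_1 and 2·u_2) lies in the affine span of 2·w_0, ..., 2·w_{n−1}. -/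
/-- Let `n ≥ 2` and let `w 0, ..., w (n−1), u₁, u₂` be points of `ℤ^n` such that
both families `(w 1 − w 0, ..., w (n−1) − w 0, u₁ − w 0)` and
`(w 1 − w 0, ..., w (n−1) − w 0, u₂ − w 0)` are `ℤ`-bases of `ℤ^n` (unit determinant), and such
that `u₁` and `u₂` lie strictly on opposite sides of the affine hyperplane `H` spanned by
`w 0, ..., w (n−1)` (neither belongs to `H`, and the open segment joining them meets `H`). Then
the point `u₁ + u₂` lies in the affine span of `2·w 0, ..., 2·w (n−1)`. -/
theorem stmt8 (n : ℕ) (hn : 2 ≤ n) (w : Fin n → Fin n → ℤ) (u₁ u₂ : Fin n → ℤ)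
    (hb1 : IsUnit (Matrix.det (Matrix.of fun j t : Fin n =>
      if h : (j : ℕ) + 1 < n then w ⟨(j : ℕ) + 1, h⟩ t - w ⟨0, by omega⟩ t
      else u₁ t - w ⟨0, by omega⟩ t)))
    (hb2 : IsUnit (Matrix.det (Matrix.of fun j t : Fin n =>
      if h : (j : ℕ) + 1 < n then w ⟨(j : ℕ) + 1, h⟩ t - w ⟨0, by omega⟩ t
      else u₂ t - w ⟨0, by omega⟩ t)))
    (h1 : toReal u₁ ∉ affineSpan ℝ (Set.range fun j => toReal (w j)))
    (h2 : toReal u₂ ∉ affineSpan ℝ (Set.range fun j => toReal (w j)))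
    (hseg : (openSegment ℝ (toReal u₁) (toReal u₂) ∩
      (affineSpan ℝ (Set.range fun j => toReal (w j)) : Set (Fin n → ℝ))).Nonempty) :
    toReal (u₁ + u₂) ∈ affineSpan ℝ (Set.range fun j => toReal (2 • w j)) := by
  have hn0 : 0 < n := by omega
  set z : Fin n := ⟨0, hn0⟩ with hz
  set L : Fin n := ⟨n - 1, by omega⟩ with hL
  set M : Matrix (Fin n) (Fin n) ℤ := Matrix.of fun j t =>
      if h : (j : ℕ) + 1 < n then w ⟨(j : ℕ) + 1, h⟩ t - w z t
      else u₁ t - w z t with hMdef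
  have hbm : IsUnit M.det := hb1
  -- coordinates of u₂ - w z in the basis given by the rows of M
  set c : Fin n → ℤ := Matrix.vecMul (fun t => u₂ t - w z t) M⁻¹ with hcdef
  have hc : Matrix.vecMul c M = fun t => u₂ t - w z t := by
    rw [hcdef, Matrix.vecMul_vecMul, Matrix.nonsing_inv_mul M hbm, Matrix.vecMul_one]
  have hx : (fun t => u₂ t - w z t) = ∑ j, c j • M j := by
    rw [← hc]; funext t
    simp [Matrix.vecMul, dotProduct, Finset.sum_apply]
  -- the second matrix is M with row L replaced
  have hM2 : (Matrix.of fun j t : Fin n =>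
      if h : (j : ℕ) + 1 < n then w ⟨(j : ℕ) + 1, h⟩ t - w ⟨0, hn0⟩ t
      else u₂ t - w ⟨0, hn0⟩ t) = M.updateRow L (fun t => u₂ t - w z t) := by
    funext j t
    rw [Matrix.updateRow_apply]
    by_cases h : (j : ℕ) + 1 < n
    · have hjL : j ≠ L := by
        intro hjl; rw [hjl] at h; simp [hL] at h; omega
      simp [h, hjL, hMdef, hz]
    · have hjL : j = L := by
        ext; simp [hL]; omega
      have hnl : ¬ ((L : ℕ) + 1 < n) := by simp [hL]; omega
      simp [hjL, hnl, hz]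
  have hdet2 : (M.updateRow L (fun t => u₂ t - w z t)).det = c L * M.det := by
    rw [hx, Matrix.det_updateRow_sum, smul_eq_mul]
  have hcLunit : IsUnit (c L) := by
    have : IsUnit (c L * M.det) := by rw [← hdet2, ← hM2]; exact hb2
    exact isUnit_of_mul_isUnit_left this
  have hML : M L = fun t => u₁ t - w z t := by
    funext t
    have : ¬ ((L : ℕ) + 1 < n) := by simp [hL]; omega
    simp [hMdef, this]
  -- pointwise identity, with the L-term split off
  have hsplit : ∀ t, u₂ t - w z t =
      (∑ j ∈ Finset.univ.erase L, c j * M j t) + c L * (u₁ t - w z t) := by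
    intro t
    have := congrFun hx t
    rw [this, Finset.sum_apply]
    rw [← Finset.sum_erase_add _ _ (Finset.mem_univ L)]
    simp [hML]
  -- direction membership facts
  have hd1 : ∀ j : Fin n, j ≠ L → toReal (M j) ∈
      (affineSpan ℝ (Set.range fun j => toReal (w j))).direction := by
    intro j hj
    have hjlt : (j : ℕ) + 1 < n := by
      by_contra h
      exact hj (by ext; simp [hL]; omega)
    have h1m : toReal (w ⟨(j : ℕ) + 1, hjlt⟩) ∈ affineSpan ℝ (Set.range fun j => toReal (w j)) :=
      subset_affineSpan ℝ _ ⟨_, rfl⟩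
    have h2m : toReal (w z) ∈ affineSpan ℝ (Set.range fun j => toReal (w j)) :=
      subset_affineSpan ℝ _ ⟨z, rfl⟩
    have := AffineSubspace.vsub_mem_direction h1m h2m
    convert this using 1
    funext t
    simp [toReal, hMdef, hjlt]
  have hd2 : ∀ j : Fin n, j ≠ L → toReal (M j) ∈
      (affineSpan ℝ (Set.range fun j => toReal (2 • w j))).direction := by
    intro j hj
    have hjlt : (j : ℕ) + 1 < n := by
      by_contra h
      exact hj (by ext; simp [hL]; omega)
    have h1m : toReal (2 • w ⟨(j : ℕ) + 1, hjlt⟩) ∈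
        affineSpan ℝ (Set.range fun j => toReal (2 • w j)) :=
      subset_affineSpan ℝ _ ⟨_, rfl⟩
    have h2m : toReal (2 • w z) ∈ affineSpan ℝ (Set.range fun j => toReal (2 • w j)) :=
      subset_affineSpan ℝ _ ⟨z, rfl⟩
    have hmem := AffineSubspace.vsub_mem_direction h1m h2m
    have heq : toReal (M j) = (1/2 : ℝ) •
        (toReal (2 • w ⟨(j : ℕ) + 1, hjlt⟩) -ᵥ toReal (2 • w z)) := by
      funext t
      simp [toReal, hMdef, hjlt, Pi.smul_apply]
      push_cast
      ring
    rw [heq]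
    exact Submodule.smul_mem _ _ hmem
  rcases Int.isUnit_iff.mp hcLunit with hcL | hcL
  · -- c L = 1 : contradiction with the segment hypothesis
    exfalso
    have hdir : toReal u₂ - toReal u₁ ∈
        (affineSpan ℝ (Set.range fun j => toReal (w j))).direction := by
      have heq : toReal u₂ - toReal u₁ =
          ∑ j ∈ Finset.univ.erase L, (c j : ℝ) • toReal (M j) := by
        funext t
        have := hsplit t
        rw [hcL, one_mul] at this
        have h2 : u₂ t - u₁ t = ∑ j ∈ Finset.univ.erase L, c j * M j t := by omega
        simp only [Pi.sub_apply, Finset.sum_apply, Pi.smul_apply, smul_eq_mul, toReal]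
        exact_mod_cast congrArg (Int.cast : ℤ → ℝ) h2
      rw [heq]
      exact Submodule.sum_mem _ fun j hj =>
        Submodule.smul_mem _ _ (hd1 j (Finset.ne_of_mem_erase hj))
    obtain ⟨x, hxseg, hxspan⟩ := hseg
    obtain ⟨a, b, ha, hb, hab, hxeq⟩ := hxseg
    apply h1
    have hu1 : toReal u₁ = (-b) • (toReal u₂ - toReal u₁) +ᵥ x := by
      rw [← hxeq]
      funext t
      simp only [Pi.vadd_apply, Pi.smul_apply, Pi.sub_apply, Pi.add_apply, smul_eq_mul,
        vadd_eq_add]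
      have : a = 1 - b := by linarith
      rw [this]; ring
    rw [hu1]
    exact AffineSubspace.vadd_mem_of_mem_direction (Submodule.smul_mem _ _ hdir) hxspan
  · -- c L = -1 : the actual conclusion
    have hdir : toReal (u₁ + u₂) - toReal (2 • w z) ∈
        (affineSpan ℝ (Set.range fun j => toReal (2 • w j))).direction := by
      have heq : toReal (u₁ + u₂) - toReal (2 • w z) =
          ∑ j ∈ Finset.univ.erase L, (c j : ℝ) • toReal (M j) := by
        funext t
        have := hsplit t
        rw [hcL] at this
        have h2 : u₁ t + u₂ t - 2 * w z t = ∑ j ∈ Finset.univ.erase L, c j * M j t := by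
          omega
        simp only [Pi.sub_apply, Finset.sum_apply, Pi.smul_apply, smul_eq_mul, toReal,
          Pi.add_apply, nsmul_eq_mul, Pi.mul_apply, Pi.ofNat_apply]
        have h3 := congrArg (Int.cast : ℤ → ℝ) h2
        push_cast at h3 ⊢
        simp only [show (2 : Fin n → ℤ) t = (2:ℤ) from rfl]
        push_cast
        linarith [h3]
      rw [heq]
      exact Submodule.sum_mem _ fun j hj =>
        Submodule.smul_mem _ _ (hd2 j (Finset.ne_of_mem_erase hj))
    have hz2 : toReal (2 • w z) ∈ affineSpan ℝ (Set.range fun j => toReal (2 • w j)) :=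
      subset_affineSpan ℝ _ ⟨z, rfl⟩
    have : toReal (u₁ + u₂) =
        (toReal (u₁ + u₂) - toReal (2 • w z)) +ᵥ toReal (2 • w z) := by
      funext t; simp [vadd_eq_add]
    rw [this]
    exact AffineSubspace.vadd_mem_of_mem_direction hdir hz2
end

section
/- Let n and m be positive integers, let K be a triangulation with integer vertices of the simplex Δ_m^n, and let O ∈ ℤ^n be a point outside Δ_m^n that is generic with respect to K. Let k be an integer with 0 ≤ k ≤ n−1 and let σ be a k-dimensional face of K whose relative interior is contained in the interior of Δ_m^n; let X be the barycenter of σ. Then there exist a real number ε > 0 and two distinct n-dimensional faces B and F of K, both containing σ, such that for every t ∈ (0, ε), the point X + t·(X − O) lies in the interior of B and the point X − t·(X − O) lies in the interior of F. -/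
/-- A point `O` is generic with respect to `K` if it does not lie in any affine hyperplane
containing an `(n−1)`-dimensional face of `K`; since such a face spans a unique hyperplane (its
affine span), this means `O` is not in the affine span of any `(n−1)`-dimensional face. -/
def IsGeneric {n : ℕ} (K : Geometry.SimplicialComplex ℝ (Fin n → ℝ)) (O : Fin n → ℝ) : Prop :=
  ∀ s ∈ K.faces, s.card = n → O ∉ affineSpan ℝ (s : Set (Fin n → ℝ))

/-- The barycenter of a simplex given by its finite set of vertices. -/
noncomputable def barycenter {n : ℕ} (σ : Finset (Fin n → ℝ)) : Fin n → ℝ :=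
  (σ.card : ℝ)⁻¹ • ∑ x ∈ σ, x

open Finset Set

variable {n : ℕ}

lemma sum_const_inv_card {σ : Finset (Fin n → ℝ)} (h : σ.Nonempty) :
    ∑ _i : σ, (σ.card : ℝ)⁻¹ = 1 := by
  have : (σ.card : ℝ) ≠ 0 := Nat.cast_ne_zero.2 (Finset.card_ne_zero_of_mem h.choose_spec)
  simp [Finset.sum_const, Finset.card_univ, Fintype.card_coe]
  field_simp

lemma barycenter_eq_affineCombination {σ : Finset (Fin n → ℝ)} (h : σ.Nonempty) :
    barycenter σ = (Finset.univ : Finset σ).affineCombination ℝ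
      (fun i => (i : Fin n → ℝ)) (fun _ => (σ.card : ℝ)⁻¹) := by
  rw [Finset.affineCombination_eq_linear_combination _ _ _ (sum_const_inv_card h)]
  rw [barycenter, Finset.smul_sum, Finset.sum_coe_sort σ (fun x => (σ.card : ℝ)⁻¹ • x)]

lemma barycenter_mem_convexHull {σ : Finset (Fin n → ℝ)} (h : σ.Nonempty) :
    barycenter σ ∈ convexHull ℝ (σ : Set (Fin n → ℝ)) := by
  have := σ.centroid_mem_convexHull (R := ℝ) h
  have hc : σ.centroid ℝ id = barycenter σ := by
    rw [barycenter_eq_affineCombination h, ← Finset.centroid_univ,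
      Finset.centroid_def]
    congr 1
    funext i
    simp [Finset.centroidWeights_apply, Finset.card_univ, Fintype.card_coe]
  rwa [hc] at this

lemma exists_affineCombination_subset {B τ : Finset (Fin n → ℝ)} (hτB : τ ⊆ B) {x : Fin n → ℝ}
    (hx : x ∈ convexHull ℝ (τ : Set (Fin n → ℝ))) :
    ∃ (s : Finset {y // y ∈ B}) (w : {y // y ∈ B} → ℝ),
      (∀ i ∈ s, (i : Fin n → ℝ) ∈ τ) ∧ (∀ i ∈ s, 0 ≤ w i) ∧ (∑ i ∈ s, w i = 1) ∧
      s.affineCombination ℝ (fun i => (i : Fin n → ℝ)) w = x := by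
  classical
  rw [Finset.convexHull_eq] at hx
  obtain ⟨w, hw0, hw1, hwx⟩ := hx
  let e : {y // y ∈ τ} ↪ {y // y ∈ B} :=
    ⟨fun i => ⟨i.1, hτB i.2⟩, by intro a b h; exact Subtype.ext (congrArg (Subtype.val : {y // y ∈ B} → Fin n → ℝ) h)⟩
  refine ⟨τ.attach.map e, fun i => w i, ?_, ?_, ?_, ?_⟩
  · intro i hi
    obtain ⟨j, _, rfl⟩ := Finset.mem_map.1 hi
    exact j.2
  · intro i hi
    obtain ⟨j, _, rfl⟩ := Finset.mem_map.1 hi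
    exact hw0 _ j.2
  · rw [Finset.sum_map]
    show ∑ i ∈ τ.attach, w ↑i = 1
    rw [Finset.sum_attach τ w]; exact hw1
  · rw [Finset.affineCombination_eq_linear_combination _ _ _
      (by rw [Finset.sum_map]
          show ∑ i ∈ τ.attach, w ↑i = 1
          rw [Finset.sum_attach τ w]; exact hw1)]
    rw [Finset.sum_map]
    show ∑ i ∈ τ.attach, w ↑i • (i : Fin n → ℝ) = x
    rw [Finset.sum_attach τ (fun y => w y • y), ← Finset.centerMass_eq_of_sum_1 _ _ hw1]
    exact hwx

lemma subset_of_barycenter_mem_convexHull {σ τ : Finset (Fin n → ℝ)}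
    (hind : AffineIndependent ℝ ((↑) : σ → (Fin n → ℝ))) (hne : σ.Nonempty)
    (hτσ : τ ⊆ σ) (hX : barycenter σ ∈ convexHull ℝ (τ : Set (Fin n → ℝ))) : σ ⊆ τ := by
  by_contra hsub
  obtain ⟨i₀, hi₀σ, hi₀τ⟩ := Finset.not_subset.1 hsub
  obtain ⟨s, w, hsτ, _, hw1, hwx⟩ := exists_affineCombination_subset hτσ hX
  have hcard : (σ.card : ℝ) ≠ 0 := Nat.cast_ne_zero.2 (Finset.card_ne_zero_of_mem hne.choose_spec)
  have key := hind.indicator_eq_of_affineCombination_eq Finset.univ s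
    (fun _ => (σ.card : ℝ)⁻¹) w (sum_const_inv_card hne) hw1
    (by rw [hwx, ← barycenter_eq_affineCombination hne])
  have h1 := congrFun key ⟨i₀, hi₀σ⟩
  have hni : (⟨i₀, hi₀σ⟩ : {y // y ∈ σ}) ∉ (s : Set {y // y ∈ σ}) := by
    intro hmem
    exact hi₀τ (hsτ _ (by exact_mod_cast hmem))
  rw [Set.indicator_of_mem (by simp) _, Set.indicator_of_notMem hni] at h1
  exact inv_ne_zero hcard h1

noncomputable def fullBasis {B : Finset (Fin n → ℝ)}
    (hind : AffineIndependent ℝ ((↑) : B → (Fin n → ℝ))) (hcard : B.card = n + 1) :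
    AffineBasis {y // y ∈ B} ℝ (Fin n → ℝ) :=
  ⟨fun i => (i : Fin n → ℝ), hind, by
    exact hind.affineSpan_eq_top_iff_card_eq_finrank_add_one.2
      (by simp [Fintype.card_coe, hcard, Module.finrank_pi])⟩

lemma fullBasis_apply {B : Finset (Fin n → ℝ)}
    (hind : AffineIndependent ℝ ((↑) : B → (Fin n → ℝ))) (hcard : B.card = n + 1) :
    ⇑(fullBasis hind hcard) = (Subtype.val : {y // y ∈ B} → (Fin n → ℝ)) := rfl

lemma interior_full_hull {B : Finset (Fin n → ℝ)}
    (hind : AffineIndependent ℝ ((↑) : B → (Fin n → ℝ))) (hcard : B.card = n + 1) :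
    interior (convexHull ℝ (B : Set (Fin n → ℝ)))
      = {x | ∀ i, 0 < (fullBasis hind hcard).coord i x} := by
  have := (fullBasis hind hcard).interior_convexHull
  rwa [fullBasis_apply, Subtype.range_coe] at this

lemma coord_eq_zero_of_mem_hull_subset {B τ : Finset (Fin n → ℝ)}
    (hind : AffineIndependent ℝ ((↑) : B → (Fin n → ℝ))) (hcard : B.card = n + 1)
    (hτB : τ ⊆ B) {i : {y // y ∈ B}} (hiτ : (i : Fin n → ℝ) ∉ τ) {x : Fin n → ℝ}
    (hx : x ∈ convexHull ℝ (τ : Set (Fin n → ℝ))) :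
    (fullBasis hind hcard).coord i x = 0 := by
  obtain ⟨s, w, hsτ, _, hw1, hwx⟩ := exists_affineCombination_subset hτB hx
  have his : i ∉ s := fun hmem => hiτ (hsτ _ hmem)
  have := (fullBasis hind hcard).coord_apply_combination_of_notMem his hw1
  rw [fullBasis_apply] at this
  rw [← hwx]
  exact this

lemma not_mem_interior_of_mem_hull_proper {B τ : Finset (Fin n → ℝ)}
    (hind : AffineIndependent ℝ ((↑) : B → (Fin n → ℝ))) (hcard : B.card = n + 1)
    (hτB : τ ⊆ B) {i₀ : Fin n → ℝ} (hi₀B : i₀ ∈ B) (hi₀τ : i₀ ∉ τ) {x : Fin n → ℝ}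
    (hx : x ∈ convexHull ℝ (τ : Set (Fin n → ℝ))) :
    x ∉ interior (convexHull ℝ (B : Set (Fin n → ℝ))) := by
  rw [interior_full_hull hind hcard]
  intro hmem
  have h0 := coord_eq_zero_of_mem_hull_subset hind hcard hτB (i := ⟨i₀, hi₀B⟩) hi₀τ hx
  have := hmem ⟨i₀, hi₀B⟩
  rw [h0] at this
  exact lt_irrefl 0 this

lemma mem_facet_hull_of_not_interior {B : Finset (Fin n → ℝ)}
    (hind : AffineIndependent ℝ ((↑) : B → (Fin n → ℝ))) (hcard : B.card = n + 1)
    {x : Fin n → ℝ} (hx : x ∈ convexHull ℝ (B : Set (Fin n → ℝ)))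
    (hnx : x ∉ interior (convexHull ℝ (B : Set (Fin n → ℝ)))) :
    ∃ i ∈ B, x ∈ convexHull ℝ ((B.erase i : Finset (Fin n → ℝ)) : Set (Fin n → ℝ)) := by
  classical
  obtain ⟨s, w, hsB, hw0, hw1, hwx⟩ := exists_affineCombination_subset (Finset.Subset.refl B) hx
  rw [interior_full_hull hind hcard] at hnx
  simp only [Set.mem_setOf_eq, not_forall, not_lt] at hnx
  obtain ⟨j, hj⟩ := hnx
  have hwj0 : ∀ _ : j ∈ s, w j = 0 := by
    intro hjs
    have hc2 : (fullBasis hind hcard).coord j x = w j := by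
      rw [← hwx]
      have := (fullBasis hind hcard).coord_apply_combination_of_mem hjs hw1
      rw [fullBasis_apply] at this; exact this
    exact le_antisymm (hc2 ▸ hj) (hw0 j hjs)
  refine ⟨j, j.2, ?_⟩
  have hsum' : ∑ i ∈ s.erase j, w i = 1 := by
    by_cases hjs : j ∈ s
    · rw [Finset.sum_erase _ (hwj0 hjs)]; exact hw1
    · rw [Finset.erase_eq_of_notMem hjs]; exact hw1
  have hxval : x = ∑ i ∈ s.erase j, w i • (i : Fin n → ℝ) := by
    rw [← hwx, Finset.affineCombination_eq_linear_combination _ _ _ hw1]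
    by_cases hjs : j ∈ s
    · exact (Finset.sum_erase s (by rw [hwj0 hjs, zero_smul])).symm
    · rw [Finset.erase_eq_of_notMem hjs]
  have := Finset.centerMass_mem_convexHull (s := ((B.erase (j : Fin n → ℝ) : Finset (Fin n → ℝ)) : Set (Fin n → ℝ))) (s.erase j)
    (w := w) (fun i hi => hw0 i (Finset.mem_of_mem_erase hi)) (by rw [hsum']; norm_num)
    (z := fun i => (i : Fin n → ℝ))
    (fun i hi => by
      have hiB : (i : Fin n → ℝ) ∈ B := i.2
      have hij : (i : Fin n → ℝ) ≠ (j : Fin n → ℝ) := by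
        intro h
        exact (Finset.ne_of_mem_erase hi) (Subtype.ext h)
      exact Finset.mem_coe.2 (Finset.mem_erase.2 ⟨hij, hiB⟩))
  rwa [Finset.centerMass_eq_of_sum_1 _ _ hsum', ← hxval] at this

open Geometry in
lemma interior_hull_low_empty {K : Geometry.SimplicialComplex ℝ (Fin n → ℝ)}
    {s : Finset (Fin n → ℝ)} (hs : s ∈ K.faces) (hc : s.card ≠ n + 1) :
    interior (convexHull ℝ (s : Set (Fin n → ℝ))) = ∅ := by
  by_contra h
  have hne : (interior (convexHull ℝ (s : Set (Fin n → ℝ)))).Nonempty :=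
    Set.nonempty_iff_ne_empty.2 h
  have htop : affineSpan ℝ (s : Set (Fin n → ℝ)) = ⊤ :=
    affineSpan_eq_top_of_nonempty_interior hne
  have := (K.indep hs).affineSpan_eq_top_iff_card_eq_finrank_add_one.1
    (by rwa [Subtype.range_coe])
  rw [Fintype.card_coe] at this
  exact hc (by simpa [Module.finrank_pi] using this)

lemma interior_biUnion_low_empty {A : Set (Finset (Fin n → ℝ))} (hA : A.Finite)
    (hlow : ∀ s ∈ A, interior (convexHull ℝ (s : Set (Fin n → ℝ))) = ∅) :
    interior (⋃ s ∈ A, convexHull ℝ (s : Set (Fin n → ℝ))) = ∅ := by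
  refine Set.Finite.induction_on
    (motive := fun (A : Set (Finset (Fin n → ℝ))) _ => (∀ s ∈ A, interior (convexHull ℝ (s : Set (Fin n → ℝ))) = ∅) →
      interior (⋃ s ∈ A, convexHull ℝ (s : Set (Fin n → ℝ))) = ∅) A hA (by simp) ?_ hlow
  intro a A' haA' hA' ih hlow'
  rw [Set.biUnion_insert, Set.union_comm]
  rw [interior_union_isClosed_of_interior_empty
    (hA'.isClosed_biUnion (fun s _ => (s.finite_toSet.isCompact_convexHull ℝ).isClosed))
    (hlow' a (Set.mem_insert a A'))]
  exact ih (fun s hsA => hlow' s (Set.mem_insert_of_mem _ hsA))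

open Geometry in
lemma mem_full_hull_of_mem_interior_space {K : Geometry.SimplicialComplex ℝ (Fin n → ℝ)}
    (hfin : K.faces.Finite) {y : Fin n → ℝ} (hy : y ∈ interior K.space) :
    ∃ B ∈ K.faces, B.card = n + 1 ∧ y ∈ convexHull ℝ (B : Set (Fin n → ℝ)) := by
  by_contra h
  push_neg at h
  set C : Set (Fin n → ℝ) :=
    ⋃ s ∈ {s ∈ K.faces | s.card = n + 1}, convexHull ℝ (s : Set (Fin n → ℝ)) with hC
  have hCclosed : IsClosed C :=
    (hfin.subset (Set.sep_subset _ _)).isClosed_biUnion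
      (fun s _ => (s.finite_toSet.isCompact_convexHull ℝ).isClosed)
  have hyC : y ∉ C := by
    intro hyC
    obtain ⟨s, hs, hys⟩ := Set.mem_iUnion₂.1 hyC
    exact h s hs.1 hs.2 hys
  have hopen : IsOpen (interior K.space ∩ Cᶜ) := isOpen_interior.inter hCclosed.isOpen_compl
  obtain ⟨r, hr, hball⟩ := Metric.isOpen_iff.1 hopen y ⟨hy, hyC⟩
  have hcover : Metric.ball y r ⊆
      ⋃ s ∈ {s ∈ K.faces | s.card ≠ n + 1}, convexHull ℝ (s : Set (Fin n → ℝ)) := by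
    intro x hx
    obtain ⟨hx1, hx2⟩ := hball hx
    obtain ⟨s, hs, hxs⟩ := Geometry.SimplicialComplex.mem_space_iff.1 (interior_subset hx1)
    rcases eq_or_ne s.card (n + 1) with hcard | hcard
    · exact absurd (Set.mem_iUnion₂.2 ⟨s, ⟨hs, hcard⟩, hxs⟩) hx2
    · exact Set.mem_iUnion₂.2 ⟨s, ⟨hs, hcard⟩, hxs⟩
  have hint : interior (⋃ s ∈ {s ∈ K.faces | s.card ≠ n + 1},
      convexHull ℝ (s : Set (Fin n → ℝ))) = ∅ :=
    interior_biUnion_low_empty (hfin.subset (Set.sep_subset _ _))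
      (fun s hs => interior_hull_low_empty hs.1 hs.2)
  have : Metric.ball y r ⊆ ∅ := hint ▸ (Metric.isOpen_ball.subset_interior_iff.2 hcover)
  exact this (Metric.mem_ball_self hr)

open Geometry in
lemma exists_face_forall_small {K : Geometry.SimplicialComplex ℝ (Fin n → ℝ)}
    (hfin : K.faces.Finite) {X v : Fin n → ℝ} {ε₀ : ℝ} (hε₀ : 0 < ε₀)
    (hcov : ∀ t ∈ Set.Icc (0:ℝ) ε₀, ∃ B ∈ K.faces, B.card = n + 1 ∧
      X + t • v ∈ convexHull ℝ (B : Set (Fin n → ℝ))) :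
    ∃ B ∈ K.faces, B.card = n + 1 ∧ ∃ δ > 0, ∀ t ∈ Set.Icc (0:ℝ) δ,
      X + t • v ∈ convexHull ℝ (B : Set (Fin n → ℝ)) := by
  classical
  set tt : ℕ → ℝ := fun j => ε₀ / (j + 1) with htt
  have httpos : ∀ j, 0 < tt j := fun j => div_pos hε₀ (by positivity)
  have httmem : ∀ j, tt j ∈ Set.Icc (0:ℝ) ε₀ := fun j =>
    ⟨(httpos j).le, div_le_self hε₀.le (by norm_num)⟩
  choose g hg1 hg2 hg3 using fun j => hcov (tt j) (httmem j)
  haveI : Finite {s // s ∈ K.faces ∧ s.card = n + 1} := by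
    have : {s | s ∈ K.faces ∧ s.card = n + 1}.Finite := hfin.subset (Set.sep_subset _ _)
    exact this
  obtain ⟨B', hB'⟩ := Finite.exists_infinite_fiber
    (fun j => (⟨g j, hg1 j, hg2 j⟩ : {s // s ∈ K.faces ∧ s.card = n + 1}))
  have hS : {j : ℕ | g j = B'.1}.Infinite := by
    rw [Set.infinite_coe_iff] at hB'
    refine hB'.mono ?_
    intro j hj
    rw [Set.mem_preimage, Set.mem_singleton_iff] at hj
    exact congrArg Subtype.val hj
  obtain ⟨j₀, hj₀⟩ := hS.nonempty
  set B := B'.1 with hBdef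
  have hBface : B ∈ K.faces := B'.2.1
  have hBcard : B.card = n + 1 := B'.2.2
  have hTclosed : IsClosed {t : ℝ | X + t • v ∈ convexHull ℝ (B : Set (Fin n → ℝ))} := by
    have hc : Continuous (fun t : ℝ => X + t • v) := by continuity
    exact IsClosed.preimage hc (B.finite_toSet.isCompact_convexHull ℝ).isClosed
  refine ⟨B, hBface, hBcard, tt j₀, httpos j₀, ?_⟩
  have hIoc : ∀ τ ∈ Set.Ioc (0:ℝ) (tt j₀),
      X + τ • v ∈ convexHull ℝ (B : Set (Fin n → ℝ)) := by
    intro τ hτ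
    obtain ⟨N, hN⟩ := exists_nat_ge (ε₀ / τ)
    obtain ⟨j, hjS, hjN⟩ := hS.exists_gt N
    have hjτ : tt j ≤ τ := by
      have hNj : (N : ℝ) ≤ (j : ℝ) + 1 := by
        have h2 : N ≤ j + 1 := le_of_lt (Nat.lt_succ_of_lt hjN)
        exact_mod_cast h2
      have h1 : ε₀ / τ ≤ (j : ℝ) + 1 := hN.trans hNj
      rw [div_le_iff₀ hτ.1] at h1
      show ε₀ / ((j : ℝ) + 1) ≤ τ
      rw [div_le_iff₀ (by positivity : (0:ℝ) < (j : ℝ) + 1)]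
      linarith
    have hseg : τ ∈ segment ℝ (tt j) (tt j₀) := by
      rw [segment_eq_Icc (le_trans hjτ hτ.2)]
      exact ⟨hjτ, hτ.2⟩
    obtain ⟨a, b, ha, hb, hab, habτ⟩ := hseg
    have h1 : X + tt j • v ∈ convexHull ℝ (B : Set (Fin n → ℝ)) := hjS ▸ hg3 j
    have h2 : X + tt j₀ • v ∈ convexHull ℝ (B : Set (Fin n → ℝ)) := hj₀ ▸ hg3 j₀
    have hcomb := (convex_convexHull ℝ (B : Set (Fin n → ℝ))) h1 h2 ha hb hab
    have heq : a • (X + tt j • v) + b • (X + tt j₀ • v)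
        = (a + b) • X + (a * tt j + b * tt j₀) • v := by module
    rw [heq, hab, one_smul] at hcomb
    have habτ' : a * tt j + b * tt j₀ = τ := by simpa [smul_eq_mul] using habτ
    rwa [habτ'] at hcomb
  intro τ hτ
  have : Set.Icc (0:ℝ) (tt j₀) ⊆ {t : ℝ | X + t • v ∈ convexHull ℝ (B : Set (Fin n → ℝ))} := by
    rw [← closure_Ioc (ne_of_lt (httpos j₀))]
    exact hTclosed.closure_subset_iff.2 hIoc
  exact this hτ

lemma bad_subsingleton {τ : Finset (Fin n → ℝ)} {O' X v : Fin n → ℝ} {c : ℝ}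
    (hc : X + c • v = O') (hO : O' ∉ affineSpan ℝ (τ : Set (Fin n → ℝ))) :
    {t : ℝ | X + t • v ∈ affineSpan ℝ (τ : Set (Fin n → ℝ))}.Subsingleton := by
  intro t₁ h₁ t₂ h₂
  by_contra hne
  apply hO
  have hmem := AffineSubspace.smul_vsub_vadd_mem (affineSpan ℝ (τ : Set (Fin n → ℝ)))
    ((c - t₁) / (t₂ - t₁)) h₂ h₁ h₁
  have hsub : (t₂ - t₁) ≠ 0 := sub_ne_zero.2 (Ne.symm hne)
  have heq : ((c - t₁)/(t₂ - t₁)) • ((X + t₂ • v) -ᵥ (X + t₁ • v)) +ᵥ (X + t₁ • v)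
      = X + c • v := by
    rw [vsub_eq_sub, vadd_eq_add]
    have h3 : (X + t₂ • v) - (X + t₁ • v) = (t₂ - t₁) • v := by module
    rw [h3, smul_smul, div_mul_cancel₀ _ hsub]
    module
  rwa [heq, hc] at hmem

lemma exists_avoid {Bad : Set ℝ} (hB : Bad.Finite) {δ : ℝ} (hδ : 0 < δ) :
    ∃ ε > 0, ε ≤ δ ∧ ∀ t ∈ Set.Ioo (0:ℝ) ε, t ∉ Bad := by
  classical
  by_cases h : (Bad ∩ Set.Ioi 0).Nonempty
  · have hfin : (Bad ∩ Set.Ioi 0).Finite := hB.inter_of_left _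
    have hne : hfin.toFinset.Nonempty := by
      rwa [Set.Finite.toFinset_nonempty]
    set μ := hfin.toFinset.min' hne with hμ
    have hμBad : μ ∈ Bad ∩ Set.Ioi 0 := by
      have := hfin.toFinset.min'_mem hne
      rwa [Set.Finite.mem_toFinset] at this
    refine ⟨min δ μ, lt_min hδ hμBad.2, min_le_left _ _, ?_⟩
    intro t ht htB
    have hμt : μ ≤ t := hfin.toFinset.min'_le t (by
      rw [Set.Finite.mem_toFinset]; exact ⟨htB, ht.1⟩)
    have : t < μ := lt_of_lt_of_le ht.2 (min_le_right _ _)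
    exact absurd this (not_lt.2 hμt)
  · exact ⟨δ, hδ, le_rfl, fun t ht htB => h ⟨t, htB, ht.1⟩⟩

open Geometry in
lemma directional {K : Geometry.SimplicialComplex ℝ (Fin n → ℝ)} (hn : 0 < n)
    (hfin : K.faces.Finite)
    {O' : Fin n → ℝ} (hgen : ∀ s ∈ K.faces, s.card = n → O' ∉ affineSpan ℝ (s : Set (Fin n → ℝ)))
    {σ : Finset (Fin n → ℝ)} (hσ : σ ∈ K.faces)
    (hXi : barycenter σ ∈ interior K.space) {v : Fin n → ℝ} {c : ℝ}
    (hc : barycenter σ + c • v = O') :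
    ∃ D ∈ K.faces, D.card = n + 1 ∧ σ ⊆ D ∧ ∃ ε > 0, ∀ t ∈ Set.Ioo (0:ℝ) ε,
      barycenter σ + t • v ∈ interior (convexHull ℝ (D : Set (Fin n → ℝ))) := by
  classical
  set X := barycenter σ with hX
  have hσne : σ.Nonempty := Finset.nonempty_of_ne_empty (fun h => K.empty_notMem (h ▸ hσ))
  -- small interval mapping into the interior of the space
  have hcont : Continuous (fun t : ℝ => X + t • v) := by continuity
  have hU : IsOpen ((fun t : ℝ => X + t • v) ⁻¹' interior K.space) :=
    (isOpen_interior).preimage hcont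
  have h0U : (0:ℝ) ∈ (fun t : ℝ => X + t • v) ⁻¹' interior K.space := by
    simp only [Set.mem_preimage, zero_smul, add_zero]
    exact hXi
  obtain ⟨r, hr, hball⟩ := Metric.isOpen_iff.1 hU 0 h0U
  set ε₀ := r / 2 with hε₀def
  have hε₀ : 0 < ε₀ := by positivity
  have hIcc : ∀ t ∈ Set.Icc (0:ℝ) ε₀, X + t • v ∈ interior K.space := by
    intro t ht
    have : t ∈ Metric.ball (0:ℝ) r := by
      rw [Metric.mem_ball, Real.dist_eq, sub_zero, abs_of_nonneg ht.1]
      exact lt_of_le_of_lt ht.2 (by linarith)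
    exact hball this
  -- choose a full face whose hull contains an initial segment
  obtain ⟨B, hBface, hBcard, δ, hδ, hBseg⟩ := exists_face_forall_small hfin hε₀
    (fun t ht => mem_full_hull_of_mem_interior_space hfin (hIcc t ht))
  -- σ ⊆ B
  have hXB : X ∈ convexHull ℝ (B : Set (Fin n → ℝ)) := by
    have := hBseg 0 ⟨le_rfl, hδ.le⟩
    simpa using this
  have hXσ : X ∈ convexHull ℝ (σ : Set (Fin n → ℝ)) := barycenter_mem_convexHull hσne
  have hXint : X ∈ convexHull ℝ ((B ∩ σ : Finset (Fin n → ℝ)) : Set (Fin n → ℝ)) := by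
    have := K.inter_subset_convexHull hBface hσ ⟨hXB, hXσ⟩
    rwa [← Finset.coe_inter] at this
  have hσB : σ ⊆ B := by
    have hsub : σ ⊆ B ∩ σ := subset_of_barycenter_mem_convexHull (K.indep hσ) hσne
      (Finset.inter_subset_right) hXint
    exact hsub.trans Finset.inter_subset_left
  -- bad set of parameters hitting (n-1)-dimensional affine spans
  set Bad : Set ℝ := ⋃ τ ∈ {τ ∈ K.faces | τ.card = n},
    {t : ℝ | X + t • v ∈ affineSpan ℝ (τ : Set (Fin n → ℝ))} with hBad
  have hBadfin : Bad.Finite := by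
    refine Set.Finite.biUnion (hfin.subset (Set.sep_subset _ _)) ?_
    intro τ hτ
    exact (bad_subsingleton hc (hgen τ hτ.1 hτ.2)).finite
  obtain ⟨ε, hε, hεδ, hεavoid⟩ := exists_avoid hBadfin hδ
  refine ⟨B, hBface, hBcard, hσB, ε, hε, ?_⟩
  intro t ht
  have htB : X + t • v ∈ convexHull ℝ (B : Set (Fin n → ℝ)) :=
    hBseg t ⟨ht.1.le, le_trans ht.2.le hεδ⟩
  by_contra hnotin
  obtain ⟨i, hiB, himem⟩ := mem_facet_hull_of_not_interior (K.indep hBface) hBcard htB hnotin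
  have herase_ne : B.erase i ≠ ∅ := by
    intro h
    have : (B.erase i).card = 0 := by rw [h]; rfl
    rw [Finset.card_erase_of_mem hiB, hBcard] at this
    omega
  have herase_face : B.erase i ∈ K.faces :=
    K.down_closed hBface (Finset.erase_subset _ _) (Finset.nonempty_of_ne_empty herase_ne)
  have herase_card : (B.erase i).card = n := by
    rw [Finset.card_erase_of_mem hiB, hBcard]
    omega
  have : t ∈ Bad := by
    rw [hBad]
    refine Set.mem_iUnion₂.2 ⟨B.erase i, ⟨herase_face, herase_card⟩, ?_⟩
    exact convexHull_subset_affineSpan _ himem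
  exact hεavoid t ht this

lemma centroid_eq_barycenter {σ : Finset (Fin n → ℝ)} (h : σ.Nonempty) :
    σ.centroid ℝ id = barycenter σ := by
  rw [barycenter_eq_affineCombination h, ← Finset.centroid_univ, Finset.centroid_def]
  congr 1
  funext i
  simp [Finset.centroidWeights_apply, Finset.card_univ, Fintype.card_coe]

lemma barycenter_mem_intrinsicInterior {σ : Finset (Fin n → ℝ)} (hne : σ.Nonempty)
    (hind : AffineIndependent ℝ ((↑) : σ → (Fin n → ℝ))) :
    barycenter σ ∈ intrinsicInterior ℝ (convexHull ℝ (σ : Set (Fin n → ℝ))) := by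
  classical
  obtain ⟨x₀, hx₀⟩ := hne
  have hne : σ.Nonempty := ⟨x₀, hx₀⟩
  haveI : Nonempty {y // y ∈ σ} := ⟨⟨x₀, hx₀⟩⟩
  set W := vectorSpan ℝ (σ : Set (Fin n → ℝ)) with hW
  have hmem : ∀ i : {y // y ∈ σ}, (i : Fin n → ℝ) - x₀ ∈ W := fun i => by
    have := vsub_mem_vectorSpan ℝ (Finset.mem_coe.2 i.2) (Finset.mem_coe.2 hx₀)
    rwa [vsub_eq_sub] at this
  set g : {y // y ∈ σ} → W := fun i => ⟨(i : Fin n → ℝ) - x₀, hmem i⟩ with hg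
  set φ : W →ᵃⁱ[ℝ] (Fin n → ℝ) :=
    (AffineIsometryEquiv.constVAdd ℝ (Fin n → ℝ) x₀).toAffineIsometry.comp
      W.subtypeₗᵢ.toAffineIsometry with hφ
  have hφapp : ∀ w : W, φ w = x₀ + (w : Fin n → ℝ) := fun w => rfl
  have hφg : ∀ i, φ (g i) = (i : Fin n → ℝ) := fun i => by
    rw [hφapp]; simp [hg]
  have hgind : AffineIndependent ℝ g := by
    apply AffineIndependent.of_comp φ.toAffineMap
    have : (⇑φ.toAffineMap ∘ g) = ((↑) : {y // y ∈ σ} → (Fin n → ℝ)) := by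
      funext i
      show φ (g i) = _
      exact hφg i
    rwa [this]
  have hrange0 : g ⟨x₀, hx₀⟩ = 0 := Subtype.ext (sub_self x₀)
  have hspan : Submodule.span ℝ (Set.range g) = ⊤ := by
    apply Submodule.map_injective_of_injective W.injective_subtype
    rw [Submodule.map_span, Submodule.map_subtype_top]
    have himg : W.subtype '' Set.range g = (fun y => y - x₀) '' (σ : Set (Fin n → ℝ)) := by
      ext z
      constructor
      · rintro ⟨w, ⟨i, rfl⟩, rfl⟩
        exact ⟨i, Finset.mem_coe.2 i.2, rfl⟩
      · rintro ⟨y, hy, rfl⟩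
        exact ⟨g ⟨y, Finset.mem_coe.1 hy⟩, Set.mem_range_self _, rfl⟩
    rw [himg, hW]
    rw [vectorSpan_eq_span_vsub_set_right ℝ (Finset.mem_coe.2 hx₀)]
    congr 1
  have htot : affineSpan ℝ (Set.range g) = ⊤ := by
    rw [AffineSubspace.affineSpan_eq_top_iff_vectorSpan_eq_top_of_nonempty _ _ _ (Set.range_nonempty g)]
    rw [vectorSpan_eq_span_vsub_set_right ℝ (Set.mem_range_self ⟨x₀, hx₀⟩)]
    rw [hrange0]
    simpa [vsub_eq_sub, Set.image_id] using hspan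
  set b : AffineBasis {y // y ∈ σ} ℝ W := ⟨g, hgind, htot⟩ with hb
  have hbfun : ⇑b = g := rfl
  have h1 : Finset.univ.centroid ℝ ⇑b ∈ intrinsicInterior ℝ (convexHull ℝ (Set.range ⇑b)) :=
    interior_subset_intrinsicInterior b.centroid_mem_interior_convexHull
  have h2 := φ.image_intrinsicInterior (convexHull ℝ (Set.range ⇑b))
  have h3 : φ '' convexHull ℝ (Set.range ⇑b) = convexHull ℝ (σ : Set (Fin n → ℝ)) := by
    rw [← φ.coe_toAffineMap, AffineMap.image_convexHull]
    congr 1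
    rw [← Set.range_comp]
    have : (⇑φ.toAffineMap ∘ ⇑b) = ((↑) : {y // y ∈ σ} → (Fin n → ℝ)) := by
      funext i
      show φ (g i) = _
      exact hφg i
    rw [this]
    exact Subtype.range_coe
  have hcent : φ (Finset.univ.centroid ℝ ⇑b) = barycenter σ := by
    rw [Finset.centroid_def, ← φ.coe_toAffineMap,
      Finset.univ.map_affineCombination ⇑b _ (Finset.univ.sum_centroidWeights_eq_one_of_nonempty ℝ
        Finset.univ_nonempty) φ.toAffineMap]
    have : (⇑φ.toAffineMap ∘ ⇑b) = ((↑) : {y // y ∈ σ} → (Fin n → ℝ)) := by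
      funext i
      show φ (g i) = _
      exact hφg i
    rw [this, ← Finset.centroid_def, Finset.centroid_univ, centroid_eq_barycenter hne]
  rw [h3] at h2
  rw [h2]
  exact ⟨_, h1, hcent⟩


/-- Let `K` be a triangulation with integer vertices of `Δ_m^n` and `O ∈ ℤ^n` a
point outside `Δ_m^n` that is generic with respect to `K`. Let `0 ≤ k ≤ n−1` and let `σ` be a
`k`-dimensional face of `K` whose relative interior is contained in the interior of `Δ_m^n`,
with barycenter `X`. Then there are `ε > 0` and two distinct `n`-dimensional faces `B`, `F` of
`K`, both containing `σ`, such that for all `t ∈ (0, ε)`, the point `X + t·(X − O)` lies in the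
interior of `B` and the point `X − t·(X − O)` lies in the interior of `F`. -/
theorem stmt12 (n m : ℕ) (hn : 0 < n) (hm : 0 < m)
    (K : Geometry.SimplicialComplex ℝ (Fin n → ℝ))
    (hK : IsIntTriangulation K (bigSimplex n (m : ℝ)))
    (O : Fin n → ℤ) (hO : toReal O ∉ bigSimplex n (m : ℝ)) (hgen : IsGeneric K (toReal O))
    (k : ℕ) (hk : k + 1 ≤ n)
    (σ : Finset (Fin n → ℝ)) (hσ : σ ∈ K.faces) (hcard : σ.card = k + 1)
    (hint : intrinsicInterior ℝ (convexHull ℝ (σ : Set (Fin n → ℝ))) ⊆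
      interior (bigSimplex n (m : ℝ))) :
    ∃ ε > (0 : ℝ), ∃ B ∈ K.faces, ∃ F ∈ K.faces,
      B ≠ F ∧ B.card = n + 1 ∧ F.card = n + 1 ∧ σ ⊆ B ∧ σ ⊆ F ∧
      ∀ t ∈ Set.Ioo (0 : ℝ) ε,
        barycenter σ + t • (barycenter σ - toReal O) ∈
          interior (convexHull ℝ (B : Set (Fin n → ℝ))) ∧
        barycenter σ - t • (barycenter σ - toReal O) ∈
          interior (convexHull ℝ (F : Set (Fin n → ℝ))) := by
  obtain ⟨hfin, _, hspace⟩ := hK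
  have hσne : σ.Nonempty := Finset.nonempty_of_ne_empty (fun h => K.empty_notMem (h ▸ hσ))
  set X := barycenter σ with hXdef
  have hXi : X ∈ interior (bigSimplex n (m : ℝ)) :=
    hint (barycenter_mem_intrinsicInterior hσne (K.indep hσ))
  have hXspace : X ∈ interior K.space := by rw [hspace]; exact hXi
  -- forward direction
  have hcB : X + (-1 : ℝ) • (X - toReal O) = toReal O := by module
  obtain ⟨B, hBface, hBcard, hσB, εB, hεB, hB⟩ :=
    directional hn hfin hgen hσ hXspace hcB
  -- backward direction
  have hcF : X + (1 : ℝ) • (toReal O - X) = toReal O := by module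
  obtain ⟨F, hFface, hFcard, hσF, εF, hεF, hF⟩ :=
    directional hn hfin hgen hσ hXspace hcF
  have hflip : ∀ t : ℝ, X - t • (X - toReal O) = X + t • (toReal O - X) := fun t => by module
  -- B ≠ F
  have hBF : B ≠ F := by
    intro hBFeq
    set t₀ := min εB εF / 2 with ht₀def
    have ht₀ : 0 < t₀ := by positivity
    have ht₀B : t₀ ∈ Set.Ioo (0:ℝ) εB :=
      ⟨ht₀, lt_of_lt_of_le (by rw [ht₀def]; linarith [min_le_left εB εF, lt_min hεB hεF]) (min_le_left εB εF)⟩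
    have ht₀F : t₀ ∈ Set.Ioo (0:ℝ) εF :=
      ⟨ht₀, lt_of_lt_of_le (by rw [ht₀def]; linarith [min_le_left εB εF, lt_min hεB hεF]) (min_le_right εB εF)⟩
    have hp := hB t₀ ht₀B
    have hq := hF t₀ ht₀F
    rw [← hBFeq] at hq
    have hIconv : Convex ℝ (interior (convexHull ℝ (B : Set (Fin n → ℝ)))) :=
      (convex_convexHull ℝ _).interior
    have hXmem := hIconv hp hq (by norm_num : (0:ℝ) ≤ 1/2) (by norm_num : (0:ℝ) ≤ 1/2)
      (by norm_num)
    have hmid : (1/2 : ℝ) • (X + t₀ • (X - toReal O)) + (1/2 : ℝ) • (X + t₀ • (toReal O - X))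
        = X := by module
    rw [hmid] at hXmem
    -- but X lies in the hull of the proper subset σ
    have hssub : σ ⊂ B := lt_of_le_of_ne hσB (by
      intro h
      rw [h, hBcard] at hcard
      omega)
    obtain ⟨i₀, hi₀B, hi₀σ⟩ := Finset.exists_of_ssubset hssub
    exact not_mem_interior_of_mem_hull_proper (K.indep hBface) hBcard hσB hi₀B hi₀σ
      (barycenter_mem_convexHull hσne) hXmem
  refine ⟨min εB εF, lt_min hεB hεF, B, hBface, F, hFface, hBF, hBcard, hFcard, hσB, hσF, ?_⟩
  intro t ht
  refine ⟨hB t ⟨ht.1, lt_of_lt_of_le ht.2 (min_le_left _ _)⟩, ?_⟩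
  rw [hflip t]
  exact hF t ⟨ht.1, lt_of_lt_of_le ht.2 (min_le_right _ _)⟩
end
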